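/- arXiv:1602.02664 — 8 statements merged into one kernel-verified Lean document; each statement's English description precedes it below -/
import Mathlib

section
/- Let (M, rk, m) be a ranked set with multiplicities whose multiplicity function m takes values in a field K, and let x, y ∈ K with x ≠ 1 and y ≠ 1. Then the arithmetic Tutte function satisfies the convolution formula 𝔐_M(x,y) = Σ_{A ⊆ M} 𝔐_{M|_A}(0, y) · T_{M/A}(x, 0). -/
open Finset

private lemma aux_swap {α β : Type*} [DecidableEq α] [AddCommMonoid β] (M : Finset α)
    (f : Finset α → Finset α → β) :
    ∑ A ∈ M.powerset, ∑ D ∈ M.powerset.filter (A ⊆ ·), f A D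
      = ∑ D ∈ M.powerset, ∑ A ∈ D.powerset, f A D := by
  simp_rw [sum_filter]
  rw [Finset.sum_comm]
  refine sum_congr rfl fun D hD => ?_
  rw [mem_powerset] at hD
  rw [← sum_filter]
  refine sum_congr ?_ (fun _ _ => rfl)
  ext A
  simp only [mem_filter, mem_powerset]
  exact ⟨fun h => h.2, fun h => ⟨h.trans hD, h⟩⟩

private lemma aux_sign_sum {α K : Type*} [DecidableEq α] [Field K] (T : Finset α) :
    ∑ S ∈ T.powerset, (-1 : K) ^ ((T.card : ℤ) - (S.card : ℤ)) = if T = ∅ then 1 else 0 := by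
  have hne : (-1 : K) ≠ 0 := by norm_num
  have hinv : ∀ s : ℕ, ((-1 : K) ^ s)⁻¹ = (-1 : K) ^ s := fun s =>
    inv_eq_of_mul_eq_one_right (by rw [← mul_pow]; norm_num)
  have h1 : ∀ S ∈ T.powerset,
      (-1 : K) ^ ((T.card : ℤ) - (S.card : ℤ)) = (-1 : K) ^ T.card * (-1 : K) ^ S.card := by
    intro S _
    rw [zpow_sub₀ hne, zpow_natCast, zpow_natCast, div_eq_mul_inv, hinv]
  rw [sum_congr rfl h1, ← mul_sum]
  have h2 : (∑ S ∈ T.powerset, (-1 : K) ^ S.card)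
      = ((∑ S ∈ T.powerset, (-1 : ℤ) ^ S.card : ℤ) : K) := by push_cast; rfl
  rw [h2, Finset.sum_powerset_neg_one_pow_card]
  split_ifs with h
  · subst h; simp
  · simp

/-- **Convolution formula for the arithmetic Tutte function** (first form).
For a ranked set with multiplicities `(M, rk, m)` with values in a field `K` and
`x ≠ 1`, `y ≠ 1`, we have
`𝔐_M(x,y) = Σ_{A ⊆ M} 𝔐_{M|_A}(0, y) · T_{M/A}(x, 0)`,
where restriction `M|_A` keeps `rk` and `m`, and contraction `M/A` has ground set `M \ A`,
rank `B ↦ rk (B ∪ A) - rk A` and multiplicity `B ↦ m (B ∪ A)`. -/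
theorem arithmetic_tutte_convolution_first
    {K : Type*} [Field K] {α : Type*} [DecidableEq α]
    (M : Finset α) (rk : Finset α → ℤ) (m : Finset α → K)
    (hrk : rk ∅ = 0) (x y : K) (hx : x ≠ 1) (hy : y ≠ 1) :
    (∑ A ∈ M.powerset, m A * (x - 1) ^ (rk M - rk A) * (y - 1) ^ ((A.card : ℤ) - rk A)) =
      ∑ A ∈ M.powerset,
        (∑ B ∈ A.powerset,
            m B * ((0 : K) - 1) ^ (rk A - rk B) * (y - 1) ^ ((B.card : ℤ) - rk B)) *
        (∑ B ∈ (M \ A).powerset,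
            (x - 1) ^ ((rk M - rk A) - (rk (B ∪ A) - rk A)) *
              ((0 : K) - 1) ^ ((B.card : ℤ) - (rk (B ∪ A) - rk A))) := by
  classical
  have hne : (-1 : K) ≠ 0 := by norm_num
  have hEven : ∀ a b : ℤ, Even (a - b) → (-1 : K) ^ a = (-1 : K) ^ b := by
    rintro a b ⟨c, hc⟩
    rw [show a = b + (c + c) by linarith, zpow_add₀ hne, Even.neg_one_zpow ⟨c, rfl⟩, mul_one]
  simp only [zero_sub]
  -- Step A : rewrite the contraction sum as a sum over supersets of `A`.
  have stepA : ∀ A ∈ M.powerset,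
      (∑ B ∈ (M \ A).powerset,
          (x - 1) ^ ((rk M - rk A) - (rk (B ∪ A) - rk A)) *
            (-1 : K) ^ ((B.card : ℤ) - (rk (B ∪ A) - rk A)))
      = ∑ D ∈ M.powerset.filter (A ⊆ ·),
          (x - 1) ^ (rk M - rk D) *
            (-1 : K) ^ (((D.card : ℤ) - (A.card : ℤ)) - rk D + rk A) := by
    intro A hA
    rw [mem_powerset] at hA
    refine sum_nbij' (i := fun C => C ∪ A) (j := fun D => D \ A) ?_ ?_ ?_ ?_ ?_
    · intro C hC
      rw [mem_powerset] at hC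
      rw [mem_filter, mem_powerset]
      exact ⟨union_subset (hC.trans (sdiff_subset)) hA, subset_union_right⟩
    · intro D hD
      rw [mem_filter, mem_powerset] at hD
      rw [mem_powerset]
      exact sdiff_subset_sdiff hD.1 Subset.rfl
    · intro C hC
      rw [mem_powerset] at hC
      exact union_sdiff_cancel_right (sdiff_disjoint.mono_left hC)
    · intro D hD
      rw [mem_filter, mem_powerset] at hD
      exact sdiff_union_of_subset hD.2
    · intro C hC
      rw [mem_powerset] at hC
      have hdisj : Disjoint C A := sdiff_disjoint.mono_left hC
      have hcard : (C ∪ A).card = C.card + A.card := card_union_of_disjoint hdisj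
      congr 1
      · congr 1; ring
      · congr 1
        have : ((C ∪ A).card : ℤ) = (C.card : ℤ) + (A.card : ℤ) := by exact_mod_cast hcard
        rw [this]; ring
  have e1 : (∑ A ∈ M.powerset,
        (∑ B ∈ A.powerset, m B * (-1 : K) ^ (rk A - rk B) * (y - 1) ^ ((B.card : ℤ) - rk B)) *
        (∑ B ∈ (M \ A).powerset,
            (x - 1) ^ ((rk M - rk A) - (rk (B ∪ A) - rk A)) *
              (-1 : K) ^ ((B.card : ℤ) - (rk (B ∪ A) - rk A))))
      = ∑ A ∈ M.powerset,
        (∑ B ∈ A.powerset, m B * (-1 : K) ^ (rk A - rk B) * (y - 1) ^ ((B.card : ℤ) - rk B)) *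
        (∑ D ∈ M.powerset.filter (A ⊆ ·),
            (x - 1) ^ (rk M - rk D) *
              (-1 : K) ^ (((D.card : ℤ) - (A.card : ℤ)) - rk D + rk A)) :=
    sum_congr rfl fun A hA => by rw [stepA A hA]
  rw [e1]
  simp_rw [Finset.mul_sum, Finset.sum_mul]
  rw [aux_swap]
  have e2 : ∀ D ∈ M.powerset,
      (∑ A ∈ D.powerset, ∑ B ∈ A.powerset,
          m B * (-1 : K) ^ (rk A - rk B) * (y - 1) ^ ((B.card : ℤ) - rk B) *
            ((x - 1) ^ (rk M - rk D) *
              (-1 : K) ^ (((D.card : ℤ) - (A.card : ℤ)) - rk D + rk A)))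
      = ∑ B ∈ D.powerset, ∑ A ∈ D.powerset.filter (B ⊆ ·),
          m B * (-1 : K) ^ (rk A - rk B) * (y - 1) ^ ((B.card : ℤ) - rk B) *
            ((x - 1) ^ (rk M - rk D) *
              (-1 : K) ^ (((D.card : ℤ) - (A.card : ℤ)) - rk D + rk A)) :=
    fun D _ => (aux_swap D _).symm
  rw [sum_congr rfl fun D hD => e2 D hD]
  -- Now compute the inner sum over `A` with `B ⊆ A ⊆ D`.
  have key : ∀ D ∈ M.powerset, ∀ B ∈ D.powerset,
      (∑ A ∈ D.powerset.filter (B ⊆ ·),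
          m B * (-1 : K) ^ (rk A - rk B) * (y - 1) ^ ((B.card : ℤ) - rk B) *
            ((x - 1) ^ (rk M - rk D) *
              (-1 : K) ^ (((D.card : ℤ) - (A.card : ℤ)) - rk D + rk A)))
      = if B = D then m D * (x - 1) ^ (rk M - rk D) * (y - 1) ^ ((D.card : ℤ) - rk D) else 0 := by
    intro D hD B hB
    rw [mem_powerset] at hD hB
    have hterm : ∀ A : Finset α,
        (-1 : K) ^ (rk A - rk B) * (-1 : K) ^ (((D.card : ℤ) - (A.card : ℤ)) - rk D + rk A)
          = (-1 : K) ^ (-rk B - rk D) * (-1 : K) ^ ((D.card : ℤ) - (A.card : ℤ)) := by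
      intro A
      rw [← zpow_add₀ hne, ← zpow_add₀ hne]
      exact hEven _ _ ⟨rk A, by ring⟩
    have step1 : (∑ A ∈ D.powerset.filter (B ⊆ ·),
        m B * (-1 : K) ^ (rk A - rk B) * (y - 1) ^ ((B.card : ℤ) - rk B) *
          ((x - 1) ^ (rk M - rk D) *
            (-1 : K) ^ (((D.card : ℤ) - (A.card : ℤ)) - rk D + rk A)))
        = (m B * (y - 1) ^ ((B.card : ℤ) - rk B) * (x - 1) ^ (rk M - rk D) *
            (-1 : K) ^ (-rk B - rk D)) *
          ∑ A ∈ D.powerset.filter (B ⊆ ·), (-1 : K) ^ ((D.card : ℤ) - (A.card : ℤ)) := by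
      rw [mul_sum]
      refine sum_congr rfl fun A hA => ?_
      calc m B * (-1 : K) ^ (rk A - rk B) * (y - 1) ^ ((B.card : ℤ) - rk B) *
            ((x - 1) ^ (rk M - rk D) *
              (-1 : K) ^ (((D.card : ℤ) - (A.card : ℤ)) - rk D + rk A))
          = (m B * (y - 1) ^ ((B.card : ℤ) - rk B) * (x - 1) ^ (rk M - rk D)) *
              ((-1 : K) ^ (rk A - rk B) *
                (-1 : K) ^ (((D.card : ℤ) - (A.card : ℤ)) - rk D + rk A)) := by ring
        _ = _ := by rw [hterm A]; ring
    rw [step1]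
    have step2 : (∑ A ∈ D.powerset.filter (B ⊆ ·), (-1 : K) ^ ((D.card : ℤ) - (A.card : ℤ)))
        = ∑ S ∈ (D \ B).powerset, (-1 : K) ^ (((D \ B).card : ℤ) - (S.card : ℤ)) := by
      refine sum_nbij' (i := fun A => A \ B) (j := fun S => S ∪ B) ?_ ?_ ?_ ?_ ?_
      · intro A hA
        rw [mem_filter, mem_powerset] at hA
        rw [mem_powerset]
        exact sdiff_subset_sdiff hA.1 Subset.rfl
      · intro S hS
        rw [mem_powerset] at hS
        rw [mem_filter, mem_powerset]
        exact ⟨union_subset (hS.trans sdiff_subset) hB, subset_union_right⟩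
      · intro A hA
        rw [mem_filter, mem_powerset] at hA
        exact sdiff_union_of_subset hA.2
      · intro S hS
        rw [mem_powerset] at hS
        exact union_sdiff_cancel_right (sdiff_disjoint.mono_left hS)
      · intro A hA
        rw [mem_filter, mem_powerset] at hA
        congr 1
        show ((D.card : ℤ)) - (A.card : ℤ) = (((D \ B).card : ℤ)) - ((A \ B).card : ℤ)
        have h1 : (A \ B).card = A.card - B.card := card_sdiff_of_subset hA.2
        have h2 : (D \ B).card = D.card - B.card := card_sdiff_of_subset hB
        have h3 : B.card ≤ A.card := card_le_card hA.2
        have h4 : B.card ≤ D.card := card_le_card hB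
        omega
    rw [step2, aux_sign_sum]
    have hcond : (D \ B = ∅) ↔ (B = D) := by
      rw [sdiff_eq_empty_iff_subset]
      exact ⟨fun h => Subset.antisymm hB h, fun h => h ▸ Subset.rfl⟩
    rw [if_congr hcond rfl rfl]
    split_ifs with h
    · subst h
      rw [mul_one, show (-1 : K) ^ (-rk B - rk B) = 1 from
        (hEven _ 0 ⟨-rk B, by ring⟩).trans (zpow_zero _)]
      ring
    · rw [mul_zero]
  rw [sum_congr rfl fun D hD => sum_congr rfl fun B hB => key D hD B hB]
  refine sum_congr rfl fun D hD => ?_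
  rw [Finset.sum_ite_eq' D.powerset D
    (fun _ => m D * (x - 1) ^ (rk M - rk D) * (y - 1) ^ ((D.card : ℤ) - rk D)),
    if_pos (mem_powerset_self D)]
end

section
/- Let (M, rk, m) be a ranked set with multiplicities whose multiplicity function m takes values in a field K, and let x, y ∈ K with x ≠ 1 and y ≠ 1. Then the arithmetic Tutte function satisfies the convolution formula 𝔐_M(x,y) = Σ_{A ⊆ M} T_{M|_A}(0, y) · 𝔐_{M/A}(x, 0). -/
open Finset

private lemma neg1_zpow_two_mul {K : Type*} [Field K] (a : ℤ) : (-1 : K) ^ (2 * a) = 1 := by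
  rw [zpow_mul]; norm_num

private lemma neg1_zpow_neg_natCast {K : Type*} [Field K] (n : ℕ) :
    (-1 : K) ^ (-(n : ℤ)) = (-1 : K) ^ n := by
  rw [zpow_neg, zpow_natCast]
  rcases Nat.even_or_odd n with h | h
  · rw [h.neg_one_pow]; norm_num
  · rw [h.neg_one_pow]; norm_num

private lemma sum_filter_neg_one_pow {K : Type*} [Field K] {α : Type*} [DecidableEq α]
    {B D : Finset α} (h : B ⊆ D) :
    ∑ A ∈ D.powerset.filter (fun A => B ⊆ A), (-1 : K) ^ A.card =
      if D = B then (-1 : K) ^ B.card else 0 := by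
  have key : ∑ A ∈ D.powerset.filter (fun A => B ⊆ A), (-1 : K) ^ A.card
      = ∑ C ∈ (D \ B).powerset, (-1 : K) ^ (C.card + B.card) := by
    refine Finset.sum_bij' (fun A _ => A \ B) (fun C _ => C ∪ B) ?_ ?_ ?_ ?_ ?_
    · intro A hA
      simp only [mem_filter, mem_powerset] at hA
      simp only [mem_powerset]
      exact sdiff_subset_sdiff hA.1 Subset.rfl
    · intro C hC
      simp only [mem_powerset] at hC
      simp only [mem_filter, mem_powerset]
      exact ⟨union_subset (hC.trans sdiff_subset) h, subset_union_right⟩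
    · intro A hA
      simp only [mem_filter, mem_powerset] at hA
      exact sdiff_union_of_subset hA.2
    · intro C hC
      simp only [mem_powerset] at hC
      have hdisj : Disjoint C B := disjoint_of_subset_left hC sdiff_disjoint
      show (C ∪ B) \ B = C
      rw [union_sdiff_right, sdiff_eq_self_of_disjoint hdisj]
    · intro A hA
      simp only [mem_filter, mem_powerset] at hA
      show (-1 : K) ^ A.card = (-1 : K) ^ ((A \ B).card + B.card)
      congr 1
      have h1 : B.card ≤ A.card := card_le_card hA.2
      have h2 : (A \ B).card = A.card - B.card := card_sdiff_of_subset hA.2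
      omega
  rw [key]
  have h2 : ∀ C ∈ (D \ B).powerset, (-1 : K) ^ (C.card + B.card)
      = (-1 : K) ^ B.card * (-1 : K) ^ C.card := fun C _ => by rw [pow_add]; ring
  have hz : ∑ C ∈ (D \ B).powerset, (-1 : K) ^ C.card
      = if D \ B = ∅ then 1 else 0 := by
    have := congrArg (Int.cast : ℤ → K)
      (Finset.sum_powerset_neg_one_pow_card (x := D \ B))
    push_cast at this
    simpa using this
  rw [Finset.sum_congr rfl h2, ← Finset.mul_sum, hz]
  have h3 : (D \ B = ∅) ↔ D = B := by
    rw [sdiff_eq_empty_iff_subset]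
    exact ⟨fun hd => subset_antisymm hd h, fun e => e ▸ Subset.rfl⟩
  by_cases hDB : D = B
  · rw [if_pos (h3.mpr hDB), if_pos hDB, mul_one]
  · rw [if_neg (fun hh => hDB (h3.mp hh)), if_neg hDB, mul_zero]

/-- **Convolution formula for the arithmetic Tutte function** (second form).
For a ranked set with multiplicities `(M, rk, m)` with values in a field `K` and
`x ≠ 1`, `y ≠ 1`, we have
`𝔐_M(x,y) = Σ_{A ⊆ M} T_{M|_A}(0, y) · 𝔐_{M/A}(x, 0)`,
where restriction `M|_A` keeps `rk` and `m`, and contraction `M/A` has ground set `M \ A`,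
rank `B ↦ rk (B ∪ A) - rk A` and multiplicity `B ↦ m (B ∪ A)`. -/
theorem arithmetic_tutte_convolution_second
    {K : Type*} [Field K] {α : Type*} [DecidableEq α]
    (M : Finset α) (rk : Finset α → ℤ) (m : Finset α → K)
    (hrk : rk ∅ = 0) (x y : K) (hx : x ≠ 1) (hy : y ≠ 1) :
    (∑ A ∈ M.powerset, m A * (x - 1) ^ (rk M - rk A) * (y - 1) ^ ((A.card : ℤ) - rk A)) =
      ∑ A ∈ M.powerset,
        (∑ B ∈ A.powerset,
            ((0 : K) - 1) ^ (rk A - rk B) * (y - 1) ^ ((B.card : ℤ) - rk B)) *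
        (∑ B ∈ (M \ A).powerset,
            m (B ∪ A) * (x - 1) ^ ((rk M - rk A) - (rk (B ∪ A) - rk A)) *
              ((0 : K) - 1) ^ ((B.card : ℤ) - (rk (B ∪ A) - rk A))) := by
  have hne : (-1 : K) ≠ 0 := by norm_num
  -- the generic triple-sum term
  have step1 : (∑ A ∈ M.powerset,
        (∑ B ∈ A.powerset,
            ((0 : K) - 1) ^ (rk A - rk B) * (y - 1) ^ ((B.card : ℤ) - rk B)) *
        (∑ B ∈ (M \ A).powerset,
            m (B ∪ A) * (x - 1) ^ ((rk M - rk A) - (rk (B ∪ A) - rk A)) *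
              ((0 : K) - 1) ^ ((B.card : ℤ) - (rk (B ∪ A) - rk A))))
      = ∑ A ∈ M.powerset, ∑ D ∈ M.powerset.filter (fun D => A ⊆ D), ∑ B ∈ A.powerset,
          m D * (x - 1) ^ (rk M - rk D) * (y - 1) ^ ((B.card : ℤ) - rk B) *
            (-1 : K) ^ (rk A - rk B + ((D.card : ℤ) - A.card - (rk D - rk A))) := by
    refine Finset.sum_congr rfl fun A hA => ?_
    rw [Finset.sum_mul_sum, Finset.sum_comm]
    refine Finset.sum_bij' (fun C _ => C ∪ A) (fun D _ => D \ A) ?_ ?_ ?_ ?_ ?_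
    · intro C hC
      simp only [mem_powerset] at hC
      simp only [mem_filter, mem_powerset]
      exact ⟨union_subset (hC.trans sdiff_subset) (mem_powerset.mp hA), subset_union_right⟩
    · intro D hD
      simp only [mem_filter, mem_powerset] at hD
      simp only [mem_powerset]
      exact sdiff_subset_sdiff hD.1 Subset.rfl
    · intro C hC
      simp only [mem_powerset] at hC
      have hdisj : Disjoint C A := disjoint_of_subset_left hC sdiff_disjoint
      show (C ∪ A) \ A = C
      rw [union_sdiff_right, sdiff_eq_self_of_disjoint hdisj]
    · intro D hD
      simp only [mem_filter, mem_powerset] at hD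
      exact sdiff_union_of_subset hD.2
    · intro C hC
      simp only [mem_powerset] at hC
      refine Finset.sum_congr rfl fun B hB => ?_
      have hdisj : Disjoint C A := disjoint_of_subset_left hC sdiff_disjoint
      have hcard : (C ∪ A).card = C.card + A.card := card_union_of_disjoint hdisj
      have e1 : (rk M - rk A) - (rk (C ∪ A) - rk A) = rk M - rk (C ∪ A) := by ring
      have e2 : rk A - rk B + (((C ∪ A).card : ℤ) - A.card - (rk (C ∪ A) - rk A))
          = (rk A - rk B) + ((C.card : ℤ) - (rk (C ∪ A) - rk A)) := by
        have : ((C ∪ A).card : ℤ) = (C.card : ℤ) + A.card := by exact_mod_cast hcard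
        rw [this]; ring
      rw [e1, e2, zpow_add₀ hne]
      have h01 : ((0 : K) - 1) = -1 := by ring
      rw [h01]
      ring
  rw [step1]
  -- swap the outer two sums
  have step2 : (∑ A ∈ M.powerset, ∑ D ∈ M.powerset.filter (fun D => A ⊆ D), ∑ B ∈ A.powerset,
          m D * (x - 1) ^ (rk M - rk D) * (y - 1) ^ ((B.card : ℤ) - rk B) *
            (-1 : K) ^ (rk A - rk B + ((D.card : ℤ) - A.card - (rk D - rk A))))
      = ∑ D ∈ M.powerset, ∑ A ∈ D.powerset, ∑ B ∈ A.powerset,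
          m D * (x - 1) ^ (rk M - rk D) * (y - 1) ^ ((B.card : ℤ) - rk B) *
            (-1 : K) ^ (rk A - rk B + ((D.card : ℤ) - A.card - (rk D - rk A))) := by
    refine Finset.sum_comm' ?_
    intro A D
    simp only [mem_powerset, mem_filter]
    exact ⟨fun ⟨_, hD, hAD⟩ => ⟨hAD, hD⟩, fun ⟨hAD, hD⟩ => ⟨hAD.trans hD, hD, hAD⟩⟩
  rw [step2]
  refine (Finset.sum_congr rfl fun D hD => ?_).symm
  -- swap the inner two sums
  have step3 : (∑ A ∈ D.powerset, ∑ B ∈ A.powerset,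
          m D * (x - 1) ^ (rk M - rk D) * (y - 1) ^ ((B.card : ℤ) - rk B) *
            (-1 : K) ^ (rk A - rk B + ((D.card : ℤ) - A.card - (rk D - rk A))))
      = ∑ B ∈ D.powerset, ∑ A ∈ D.powerset.filter (fun A => B ⊆ A),
          m D * (x - 1) ^ (rk M - rk D) * (y - 1) ^ ((B.card : ℤ) - rk B) *
            (-1 : K) ^ (rk A - rk B + ((D.card : ℤ) - A.card - (rk D - rk A))) := by
    refine Finset.sum_comm' ?_
    intro A B
    simp only [mem_powerset, mem_filter]
    exact ⟨fun ⟨hAD, hBA⟩ => ⟨⟨hAD, hBA⟩, hBA.trans hAD⟩, fun ⟨⟨hAD, hBA⟩, _⟩ => ⟨hAD, hBA⟩⟩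
  rw [step3]
  -- evaluate the inner sum over A for each fixed B ⊆ D
  have step4 : ∀ B ∈ D.powerset,
      (∑ A ∈ D.powerset.filter (fun A => B ⊆ A),
          m D * (x - 1) ^ (rk M - rk D) * (y - 1) ^ ((B.card : ℤ) - rk B) *
            (-1 : K) ^ (rk A - rk B + ((D.card : ℤ) - A.card - (rk D - rk A))))
      = if B = D then
          m D * (x - 1) ^ (rk M - rk D) * (y - 1) ^ ((B.card : ℤ) - rk B) *
            (-1 : K) ^ ((D.card : ℤ) - rk B - rk D) * (-1 : K) ^ B.card
        else 0 := by
    intro B hB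
    simp only [mem_powerset] at hB
    have expand : ∀ A ∈ D.powerset.filter (fun A => B ⊆ A),
        m D * (x - 1) ^ (rk M - rk D) * (y - 1) ^ ((B.card : ℤ) - rk B) *
            (-1 : K) ^ (rk A - rk B + ((D.card : ℤ) - A.card - (rk D - rk A)))
        = (m D * (x - 1) ^ (rk M - rk D) * (y - 1) ^ ((B.card : ℤ) - rk B) *
            (-1 : K) ^ ((D.card : ℤ) - rk B - rk D)) * (-1 : K) ^ A.card := by
      intro A hA
      have e3 : rk A - rk B + ((D.card : ℤ) - A.card - (rk D - rk A))
          = 2 * rk A + (-(A.card : ℤ) + ((D.card : ℤ) - rk B - rk D)) := by ring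
      rw [e3, zpow_add₀ hne, zpow_add₀ hne, neg1_zpow_two_mul, neg1_zpow_neg_natCast]
      ring
    rw [Finset.sum_congr rfl expand, ← Finset.mul_sum, sum_filter_neg_one_pow hB]
    by_cases hBD : B = D
    · rw [if_pos hBD.symm, if_pos hBD]
    · rw [if_neg (fun hh => hBD hh.symm), if_neg hBD, mul_zero]
  rw [Finset.sum_congr rfl step4, Finset.sum_ite_eq' D.powerset D
    (fun B => m D * (x - 1) ^ (rk M - rk D) * (y - 1) ^ ((B.card : ℤ) - rk B) *
      (-1 : K) ^ ((D.card : ℤ) - rk B - rk D) * (-1 : K) ^ B.card),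
    if_pos (mem_powerset_self D)]
  -- final sign cleanup
  have e4 : ((D.card : ℤ) - rk D - rk D) = (D.card : ℤ) + 2 * (-(rk D)) := by ring
  rw [e4, zpow_add₀ hne, neg1_zpow_two_mul, mul_one, zpow_natCast]
  have : (-1 : K) ^ D.card * (-1 : K) ^ D.card = 1 := by
    rw [← mul_pow]; norm_num
  calc m D * (x - 1) ^ (rk M - rk D) * (y - 1) ^ ((D.card : ℤ) - rk D) *
        (-1 : K) ^ D.card * (-1 : K) ^ D.card
      = m D * (x - 1) ^ (rk M - rk D) * (y - 1) ^ ((D.card : ℤ) - rk D) *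
        ((-1 : K) ^ D.card * (-1 : K) ^ D.card) := by ring
    _ = m D * (x - 1) ^ (rk M - rk D) * (y - 1) ^ ((D.card : ℤ) - rk D) := by rw [this, mul_one]
end

section
/- Let M be a finite set, rk : 2^M → ℤ a function with rk(∅) = 0, and m₁, m₂ : 2^M → K two multiplicity functions into a field K; let (m₁m₂)(A) := m₁(A)·m₂(A). Then for all x, y ∈ K with x ≠ 1 and y ≠ 1, the arithmetic Tutte function of (M, rk, m₁m₂) satisfies 𝔐_{(M,rk,m₁m₂)}(x,y) = Σ_{A ⊆ M} 𝔐_{(M,rk,m₁)|_A}(0, y) · 𝔐_{(M,rk,m₂)/A}(x, 0). -/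
open Finset

lemma atc_neg_one_zpow_two_mul {K : Type*} [Field K] (a : ℤ) : (-1:K)^(2*a) = 1 := by
  rw [zpow_mul]; norm_num

lemma atc_neg_one_zpow_neg {K : Type*} [Field K] (a : ℤ) : (-1:K)^(-a) = (-1:K)^a := by
  rw [zpow_neg]
  exact inv_eq_of_mul_eq_one_left
    (by rw [← zpow_add₀ (by norm_num : (-1:K) ≠ 0), show a+a=2*a by ring,
      atc_neg_one_zpow_two_mul])

lemma atc_sign_sum {K : Type*} [Field K] {α : Type*} [DecidableEq α]
    (B D : Finset α) (hBD : B ⊆ D) :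
    ∑ A ∈ D.powerset.filter (B ⊆ ·), (-1:K)^(A.card:ℤ)
      = if B = D then (-1:K)^(B.card:ℤ) else 0 := by
  have h1 : ∑ A ∈ D.powerset.filter (B ⊆ ·), (-1:K)^(A.card:ℤ)
      = ∑ S ∈ (D \ B).powerset, (-1:K)^(B.card:ℤ) * (-1:K)^(S.card:ℤ) := by
    refine Finset.sum_nbij' (fun A => A \ B) (fun S => S ∪ B) ?_ ?_ ?_ ?_ ?_
    · intro A hA
      simp only [mem_filter, mem_powerset] at hA ⊢
      exact sdiff_subset_sdiff hA.1 (le_refl B)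
    · intro S hS
      simp only [mem_powerset] at hS
      simp only [mem_filter, mem_powerset]
      exact ⟨union_subset (hS.trans sdiff_subset) hBD, subset_union_right⟩
    · intro A hA
      simp only [mem_filter, mem_powerset] at hA
      exact sdiff_union_of_subset hA.2
    · intro S hS
      simp only [mem_powerset] at hS
      exact union_sdiff_cancel_right (sdiff_disjoint.mono_left hS)
    · intro A hA
      simp only [mem_filter, mem_powerset] at hA
      rw [← zpow_add₀ (by norm_num : (-1:K) ≠ 0)]
      congr 1
      show (A.card:ℤ) = (B.card:ℤ) + ((A \ B).card:ℤ)
      have h2 := Finset.card_sdiff_of_subset hA.2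
      have h3 := Finset.card_le_card hA.2
      omega
  rw [h1, ← Finset.mul_sum]
  have h4 : ∑ S ∈ (D \ B).powerset, (-1:K)^(S.card:ℤ)
      = if D \ B = ∅ then 1 else 0 := by
    have := Finset.sum_powerset_neg_one_pow_card (x := D \ B) (α := α)
    calc ∑ S ∈ (D \ B).powerset, (-1:K)^(S.card:ℤ)
        = ∑ S ∈ (D \ B).powerset, (((-1:ℤ)^S.card : ℤ) : K) := by
          refine Finset.sum_congr rfl fun S _ => ?_
          push_cast [zpow_natCast]
          ring
      _ = (((if D \ B = ∅ then 1 else 0 : ℤ)) : K) := by rw [← Int.cast_sum, this]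
      _ = if D \ B = ∅ then 1 else 0 := by split <;> simp
  rw [h4]
  have h5 : D \ B = ∅ ↔ B = D := by
    rw [sdiff_eq_empty_iff_subset]
    exact ⟨fun h => subset_antisymm hBD h, fun h => h ▸ le_refl _⟩
  by_cases h : B = D
  · simp [h5, h]
  · simp [h5, h]

/-- **Convolution formula for products of multiplicity functions.**
For a finite set `M`, a rank function `rk` with `rk ∅ = 0` and two multiplicity
functions `m₁, m₂` with values in a field `K`, and `x ≠ 1`, `y ≠ 1`,
`𝔐_{(M,rk,m₁m₂)}(x,y) = Σ_{A ⊆ M} 𝔐_{(M,rk,m₁)|_A}(0, y) · 𝔐_{(M,rk,m₂)/A}(x, 0)`. -/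
theorem arithmetic_tutte_convolution_product
    {K : Type*} [Field K] {α : Type*} [DecidableEq α]
    (M : Finset α) (rk : Finset α → ℤ) (m₁ m₂ : Finset α → K)
    (hrk : rk ∅ = 0) (x y : K) (hx : x ≠ 1) (hy : y ≠ 1) :
    (∑ A ∈ M.powerset,
        (m₁ A * m₂ A) * (x - 1) ^ (rk M - rk A) * (y - 1) ^ ((A.card : ℤ) - rk A)) =
      ∑ A ∈ M.powerset,
        (∑ B ∈ A.powerset,
            m₁ B * ((0 : K) - 1) ^ (rk A - rk B) * (y - 1) ^ ((B.card : ℤ) - rk B)) *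
        (∑ B ∈ (M \ A).powerset,
            m₂ (B ∪ A) * (x - 1) ^ ((rk M - rk A) - (rk (B ∪ A) - rk A)) *
              ((0 : K) - 1) ^ ((B.card : ℤ) - (rk (B ∪ A) - rk A))) := by
  have hm : (-1:K) ≠ 0 := by norm_num
  symm
  simp only [zero_sub]
  -- step 1: reindex the contraction sum
  have hQ : ∀ A ∈ M.powerset,
      (∑ C ∈ (M \ A).powerset,
          m₂ (C ∪ A) * (x - 1) ^ ((rk M - rk A) - (rk (C ∪ A) - rk A)) *
            (-1:K) ^ ((C.card : ℤ) - (rk (C ∪ A) - rk A)))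
      = ∑ D ∈ M.powerset.filter (A ⊆ ·),
          m₂ D * (x - 1) ^ (rk M - rk D) *
            (-1:K) ^ ((((D.card:ℤ) - A.card)) - (rk D - rk A)) := by
    intro A hA
    rw [mem_powerset] at hA
    refine Finset.sum_nbij' (fun C => C ∪ A) (fun D => D \ A) ?_ ?_ ?_ ?_ ?_
    · intro C hC
      rw [mem_powerset] at hC
      simp only [mem_filter, mem_powerset]
      exact ⟨union_subset (hC.trans sdiff_subset) hA, subset_union_right⟩
    · intro D hD
      simp only [mem_filter, mem_powerset] at hD
      rw [mem_powerset]
      exact sdiff_subset_sdiff hD.1 (le_refl A)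
    · intro C hC
      rw [mem_powerset] at hC
      exact union_sdiff_cancel_right (sdiff_disjoint.mono_left hC)
    · intro D hD
      simp only [mem_filter, mem_powerset] at hD
      exact sdiff_union_of_subset hD.2
    · intro C hC
      rw [mem_powerset] at hC
      have hdisj : Disjoint C A := sdiff_disjoint.mono_left hC
      have hcard : (((fun C => C ∪ A) C).card : ℤ) = C.card + A.card := by
        show (((C ∪ A).card : ℤ)) = _
        rw [card_union_of_disjoint hdisj]; push_cast; ring
      show _ = m₂ (C ∪ A) * (x-1)^(rk M - rk (C ∪ A)) *
          (-1:K)^(((((C ∪ A).card:ℤ) - A.card)) - (rk (C ∪ A) - rk A))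
      congr 2
      · ring
      · rw [show (((C ∪ A).card:ℤ)) = C.card + A.card from hcard]; ring
  rw [Finset.sum_congr rfl fun A hA => by rw [hQ A hA]]
  -- step 2: rewrite both factors as sums over M.powerset with indicators
  have hP : ∀ A ∈ M.powerset,
      (∑ B ∈ A.powerset,
          m₁ B * (-1:K) ^ (rk A - rk B) * (y - 1) ^ ((B.card : ℤ) - rk B))
      = ∑ B ∈ M.powerset, if B ⊆ A then
          m₁ B * (-1:K) ^ (rk A - rk B) * (y - 1) ^ ((B.card : ℤ) - rk B) else 0 := by
    intro A hA
    rw [mem_powerset] at hA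
    have hps : A.powerset = M.powerset.filter (· ⊆ A) := by
      ext B
      simp only [mem_filter, mem_powerset]
      exact ⟨fun h => ⟨h.trans hA, h⟩, fun h => h.2⟩
    rw [hps, Finset.sum_filter]
  rw [Finset.sum_congr rfl fun A hA => by rw [hP A hA, Finset.sum_filter]]
  -- step 3: expand products into triple sums and swap
  simp only [Finset.sum_mul_sum, ite_mul, zero_mul, mul_ite, mul_zero]
  rw [Finset.sum_comm]
  rw [Finset.sum_congr rfl fun B _ => Finset.sum_comm]
  have key : ∀ B ∈ M.powerset, ∀ D ∈ M.powerset,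
      (∑ A ∈ M.powerset, if A ⊆ D then if B ⊆ A then
          m₁ B * (-1:K) ^ (rk A - rk B) * (y - 1) ^ ((B.card:ℤ) - rk B) *
            (m₂ D * (x - 1) ^ (rk M - rk D) *
              (-1:K) ^ ((D.card:ℤ) - (A.card:ℤ) - (rk D - rk A)))
        else 0 else 0)
      = if B = D then
          m₁ B * m₂ B * (x - 1) ^ (rk M - rk B) * (y - 1) ^ ((B.card:ℤ) - rk B)
        else 0 := by
    intro B hB D hD
    rw [mem_powerset] at hB hD
    by_cases hBD : B ⊆ D
    · simp only [← ite_and]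
      rw [← Finset.sum_filter]
      have hfil : M.powerset.filter (fun A => A ⊆ D ∧ B ⊆ A)
          = D.powerset.filter (B ⊆ ·) := by
        ext A
        simp only [mem_filter, mem_powerset]
        exact ⟨fun h => ⟨h.2.1, h.2.2⟩, fun h => ⟨h.1.trans hD, h.1, h.2⟩⟩
      rw [hfil]
      have hterm : ∀ A ∈ D.powerset.filter (B ⊆ ·),
          m₁ B * (-1:K) ^ (rk A - rk B) * (y - 1) ^ ((B.card:ℤ) - rk B) *
            (m₂ D * (x - 1) ^ (rk M - rk D) *
              (-1:K) ^ ((D.card:ℤ) - (A.card:ℤ) - (rk D - rk A)))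
          = (m₁ B * m₂ D * (y - 1) ^ ((B.card:ℤ) - rk B) * (x - 1) ^ (rk M - rk D) *
              (-1:K) ^ ((D.card:ℤ) - rk B - rk D)) * (-1:K) ^ (A.card:ℤ) := by
        intro A hA
        have hsign : (-1:K) ^ (rk A - rk B) *
            (-1:K) ^ ((D.card:ℤ) - (A.card:ℤ) - (rk D - rk A))
            = (-1:K) ^ ((D.card:ℤ) - rk B - rk D) * (-1:K) ^ (A.card:ℤ) := by
          rw [← zpow_add₀ hm,
            show (rk A - rk B) + ((D.card:ℤ) - (A.card:ℤ) - (rk D - rk A))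
              = 2 * rk A + (((D.card:ℤ) - rk B - rk D) + (-(A.card:ℤ))) by ring,
            zpow_add₀ hm, atc_neg_one_zpow_two_mul, one_mul, zpow_add₀ hm,
            atc_neg_one_zpow_neg]
        linear_combination
          (m₁ B * m₂ D * (y - 1) ^ ((B.card:ℤ) - rk B) * (x - 1) ^ (rk M - rk D)) * hsign
      rw [Finset.sum_congr rfl hterm, ← Finset.mul_sum, atc_sign_sum B D hBD]
      by_cases hEq : B = D
      · subst hEq
        rw [if_pos rfl, if_pos rfl]
        have h1 : (-1:K) ^ ((B.card:ℤ) - rk B - rk B) * (-1:K) ^ ((B.card:ℤ)) = 1 := by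
          rw [← zpow_add₀ hm,
            show ((B.card:ℤ) - rk B - rk B) + (B.card:ℤ) = 2 * ((B.card:ℤ) - rk B) by ring,
            atc_neg_one_zpow_two_mul]
        linear_combination
          (m₁ B * m₂ B * (y - 1) ^ ((B.card:ℤ) - rk B) * (x - 1) ^ (rk M - rk B)) * h1
      · rw [if_neg hEq, if_neg hEq, mul_zero]
    · rw [if_neg (show ¬ B = D by rintro rfl; exact hBD (le_refl B))]
      apply Finset.sum_eq_zero
      intro A _
      by_cases h1 : A ⊆ D
      · rw [if_pos h1, if_neg (fun h2 => hBD (h2.trans h1))]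
      · rw [if_neg h1]
  rw [Finset.sum_congr rfl fun B hB => Finset.sum_congr rfl fun D hD => key B hB D hD]
  refine Finset.sum_congr rfl fun B hB => ?_
  rw [Finset.sum_ite_eq M.powerset B
    (fun _ => m₁ B * m₂ B * (x - 1) ^ (rk M - rk B) * (y - 1) ^ ((B.card:ℤ) - rk B)),
    if_pos hB]
end

section
/- Let (M, rk, m) be a pseudo-arithmetic matroid. Then every coefficient of the arithmetic Tutte polynomial 𝔐_M(x,y) = Σ_{A⊆M} m(A)·(x−1)^{rk(M)−rk(A)}·(y−1)^{|A|−rk(A)} ∈ ℝ[x,y] is nonnegative. -/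
open Finset

/-- `(M, rk)` is a matroid: `rk` is normalized, monotone, submodular, and unit-increasing. -/
def IsMatroidRank {α : Type*} [DecidableEq α] (M : Finset α) (rk : Finset α → ℕ) : Prop :=
  rk ∅ = 0 ∧
  (∀ A B : Finset α, A ⊆ B → B ⊆ M → rk A ≤ rk B) ∧
  (∀ A B : Finset α, A ⊆ M → B ⊆ M → rk (A ∪ B) + rk (A ∩ B) ≤ rk A + rk B) ∧
  (∀ A : Finset α, A ⊆ M → ∀ a ∈ M, rk (insert a A) ≤ rk A + 1)

/-- The interval `[R,S]`, with decomposition `S \ R = F ⊔ T`, is a molecule. -/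
def IsMolecule {α : Type*} [DecidableEq α] (M : Finset α) (rk : Finset α → ℕ)
    (R S F T : Finset α) : Prop :=
  R ⊆ S ∧ S ⊆ M ∧ Disjoint F T ∧ F ∪ T = S \ R ∧
    ∀ A : Finset α, R ⊆ A → A ⊆ S → rk A = rk R + (A ∩ F).card

/-- The positivity axiom (P): for every molecule `[R,S]` with decomposition `F ⊔ T`,
`ρ(R,S) = (−1)^{|T|} Σ_{R ⊆ A ⊆ S} (−1)^{|S|−|A|} m(A) ≥ 0`. -/
def PositivityAxiom {α : Type*} [DecidableEq α] (M : Finset α) (rk : Finset α → ℕ)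
    (m : Finset α → ℝ) : Prop :=
  ∀ R S F T : Finset α, IsMolecule M rk R S F T →
    0 ≤ (-1 : ℝ) ^ T.card *
      ∑ A ∈ S.powerset.filter (fun A => R ⊆ A), (-1 : ℝ) ^ (S.card - A.card) * m A


section Aux
variable {α : Type*} [DecidableEq α]


lemma neg_one_pow_congr' (a b : ℕ) (h : a % 2 = b % 2) : ((-1:ℝ))^a = (-1)^b := by
  rcases Nat.even_or_odd a with ha | ha
  · have hb : Even b := by rw [Nat.even_iff] at *; omega
    rw [ha.neg_one_pow, hb.neg_one_pow]
  · have hb : Odd b := by rw [Nat.odd_iff] at *; omega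
    rw [ha.neg_one_pow, hb.neg_one_pow]

/-- Sum over interval `[R, R ∪ K]` as sum over subsets of `K`. -/
lemma sum_interval {β : Type*} [AddCommMonoid β] (R K : Finset α) (hd : Disjoint R K)
    (g : Finset α → β) :
    ∑ A ∈ (R ∪ K).powerset.filter (fun A => R ⊆ A), g A = ∑ B ∈ K.powerset, g (R ∪ B) := by
  refine Finset.sum_nbij' (fun A => A \ R) (fun B => R ∪ B) ?_ ?_ ?_ ?_ ?_
  · intro A hA
    simp only [mem_filter, mem_powerset] at hA
    simp only [mem_powerset]
    intro x hx
    simp only [mem_sdiff] at hx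
    have := hA.1 hx.1
    simp only [mem_union] at this
    tauto
  · intro B hB
    simp only [mem_powerset] at hB
    simp only [mem_filter, mem_powerset]
    exact ⟨union_subset_union_right hB, subset_union_left⟩
  · intro A hA
    simp only [mem_filter, mem_powerset] at hA
    simpa using union_sdiff_of_subset hA.2
  · intro B hB
    simp only [mem_powerset] at hB
    simpa using union_sdiff_cancel_left (hd.mono_right hB)
  · intro A hA
    simp only [mem_filter, mem_powerset] at hA
    rw [union_sdiff_of_subset hA.2]

/-- Sum over subsets of a disjoint union as a double sum. -/
lemma sum_powerset_union {β : Type*} [AddCommMonoid β] (F T : Finset α) (hd : Disjoint F T)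
    (g : Finset α → β) :
    ∑ B ∈ (F ∪ T).powerset, g B = ∑ F1 ∈ F.powerset, ∑ T1 ∈ T.powerset, g (F1 ∪ T1) := by
  rw [← Finset.sum_product']
  refine Finset.sum_nbij' (fun B => (B ∩ F, B ∩ T)) (fun p => p.1 ∪ p.2) ?_ ?_ ?_ ?_ ?_
  · intro B hB
    simp [Finset.mem_product, inter_subset_right]
  · intro p hp
    simp only [Finset.mem_product, mem_powerset] at hp
    simp only [mem_powerset]
    exact union_subset (hp.1.trans subset_union_left) (hp.2.trans subset_union_right)
  · intro B hB
    simp only [mem_powerset] at hB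
    show B ∩ F ∪ B ∩ T = B
    rw [← inter_union_distrib_left, inter_eq_left.2 hB]
  · intro p hp
    simp only [Finset.mem_product, mem_powerset] at hp
    have h1 : p.2 ∩ F = ∅ := disjoint_iff_inter_eq_empty.1 (hd.symm.mono_left hp.2)
    have h2 : p.1 ∩ T = ∅ := disjoint_iff_inter_eq_empty.1 (hd.mono_left hp.1)
    show ((p.1 ∪ p.2) ∩ F, (p.1 ∪ p.2) ∩ T) = p
    rw [union_inter_distrib_right, union_inter_distrib_right, inter_eq_left.2 hp.1,
      inter_eq_left.2 hp.2, h1, h2, union_empty, empty_union]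
  · intro B hB
    simp only [mem_powerset] at hB
    show g B = g (B ∩ F ∪ B ∩ T)
    rw [← inter_union_distrib_left, inter_eq_left.2 hB]

/-- Subset-expansion of a power of `x - 1`. -/
lemma pow_card_expand {β : Type*} [CommRing β] (x : β) (K : Finset α) :
    (x - 1) ^ K.card = ∑ K2 ∈ K.powerset, (-1 : β) ^ (K \ K2).card * x ^ K2.card := by
  have : (x - 1) ^ K.card = ∏ _i ∈ K, (x + (-1)) := by
    rw [Finset.prod_const, Finset.card_def]; ring_nf
  rw [this, Finset.prod_add]
  refine Finset.sum_congr rfl fun t ht => ?_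
  rw [Finset.prod_const, Finset.prod_const, mul_comm]


lemma coeff_atom (d : Fin 2 →₀ ℕ) (c : ℝ) (u v a b : ℕ) :
    MvPolynomial.coeff d ((MvPolynomial.C c) *
        ((-1) ^ u * (MvPolynomial.X 0 : MvPolynomial (Fin 2) ℝ) ^ a) *
        ((-1) ^ v * (MvPolynomial.X 1 : MvPolynomial (Fin 2) ℝ) ^ b))
      = c * ((-1 : ℝ) ^ u * (-1 : ℝ) ^ v) *
        (if (Finsupp.single 0 a + Finsupp.single 1 b : Fin 2 →₀ ℕ) = d then 1 else 0) := by
  have h1 : ((-1 : MvPolynomial (Fin 2) ℝ)) ^ u = MvPolynomial.C ((-1 : ℝ) ^ u) := by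
    rw [map_pow, map_neg, map_one]
  have h2 : ((-1 : MvPolynomial (Fin 2) ℝ)) ^ v = MvPolynomial.C ((-1 : ℝ) ^ v) := by
    rw [map_pow, map_neg, map_one]
  have h3 : (MvPolynomial.C c) *
        ((-1) ^ u * (MvPolynomial.X 0 : MvPolynomial (Fin 2) ℝ) ^ a) *
        ((-1) ^ v * (MvPolynomial.X 1 : MvPolynomial (Fin 2) ℝ) ^ b)
      = MvPolynomial.C (c * ((-1 : ℝ) ^ u * (-1 : ℝ) ^ v)) *
        ((MvPolynomial.X 0 : MvPolynomial (Fin 2) ℝ) ^ a * (MvPolynomial.X 1) ^ b) := by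
    rw [h1, h2, map_mul, map_mul]; ring
  rw [h3, MvPolynomial.X_pow_eq_monomial, MvPolynomial.X_pow_eq_monomial,
    MvPolynomial.monomial_mul, MvPolynomial.coeff_C_mul, MvPolynomial.coeff_monomial, mul_one]

lemma sum_sum_ite {γ β : Type*} [AddCommMonoid β] (t : Finset γ) (P : Prop) [Decidable P]
    (Q : γ → Prop) [DecidablePred Q] (f : γ → β) :
    (if P then ∑ x ∈ t, if Q x then f x else 0 else 0)
      = ∑ x ∈ t, if P ∧ Q x then f x else 0 := by
  split_ifs with h
  · exact Finset.sum_congr rfl fun x _ => by simp [h]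
  · exact (Finset.sum_eq_zero fun x _ => by simp [h]).symm

lemma sum_swap4 {β : Type*} [AddCommMonoid β] (F T : Finset α)
    (g : Finset α → Finset α → Finset α → Finset α → β) :
    ∑ F1 ∈ F.powerset, ∑ T1 ∈ T.powerset, ∑ F2 ∈ (F \ F1).powerset, ∑ T2 ∈ T1.powerset,
        g F1 T1 F2 T2
      = ∑ F2 ∈ F.powerset, ∑ T2 ∈ T.powerset, ∑ F1 ∈ (F \ F2).powerset,
          ∑ T1 ∈ T.powerset.filter (fun T1 => T2 ⊆ T1), g F1 T1 F2 T2 := by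
  have hchar : ∀ X : Finset α, (F \ X).powerset = F.powerset.filter (fun Y => Disjoint Y X) := by
    intro X; ext Y; simp [Finset.subset_sdiff]
  have lhs_eq : ∑ F1 ∈ F.powerset, ∑ T1 ∈ T.powerset, ∑ F2 ∈ (F \ F1).powerset,
      ∑ T2 ∈ T1.powerset, g F1 T1 F2 T2
    = ∑ p ∈ F.powerset ×ˢ T.powerset, ∑ q ∈ F.powerset ×ˢ T.powerset,
        if Disjoint q.1 p.1 ∧ q.2 ⊆ p.2 then g p.1 p.2 q.1 q.2 else 0 := by
    rw [← Finset.sum_product']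
    refine Finset.sum_congr rfl fun p hp => ?_
    simp only [Finset.mem_product, mem_powerset] at hp
    have hT1 : p.2.powerset = T.powerset.filter (fun T2 => T2 ⊆ p.2) := by
      ext Y; simp only [mem_powerset, mem_filter]
      exact ⟨fun h => ⟨h.trans hp.2, h⟩, fun h => h.2⟩
    rw [hchar p.1, Finset.sum_filter, Finset.sum_product]
    refine Finset.sum_congr rfl fun F2 _ => ?_
    rw [hT1, Finset.sum_filter]
    exact sum_sum_ite _ _ _ _
  have rhs_eq : ∑ F2 ∈ F.powerset, ∑ T2 ∈ T.powerset, ∑ F1 ∈ (F \ F2).powerset,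
      ∑ T1 ∈ T.powerset.filter (fun T1 => T2 ⊆ T1), g F1 T1 F2 T2
    = ∑ q ∈ F.powerset ×ˢ T.powerset, ∑ p ∈ F.powerset ×ˢ T.powerset,
        if Disjoint p.1 q.1 ∧ q.2 ⊆ p.2 then g p.1 p.2 q.1 q.2 else 0 := by
    rw [← Finset.sum_product']
    refine Finset.sum_congr rfl fun q hq => ?_
    rw [hchar q.1, Finset.sum_filter, Finset.sum_product]
    refine Finset.sum_congr rfl fun F1 _ => ?_
    rw [Finset.sum_filter]
    exact sum_sum_ite _ _ _ _
  rw [lhs_eq, rhs_eq, Finset.sum_comm]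
  refine Finset.sum_congr rfl fun q _ => Finset.sum_congr rfl fun p _ => ?_
  exact if_congr (and_congr_left' disjoint_comm) rfl rfl

/-- The conclusion: a partition of the powerset of `M` into "good" molecules. -/
def GoodPartition (M : Finset α) (rk : Finset α → ℕ)
    (P : Finset (Finset α × Finset α)) : Prop :=
  (∀ p ∈ P, ∃ F T, IsMolecule M rk p.1 p.2 F T ∧ rk p.2 = rk M ∧ rk p.1 = p.1.card) ∧
  (∀ A : Finset α, A ⊆ M → ∃! p, p ∈ P ∧ p.1 ⊆ A ∧ A ⊆ p.2)

lemma partition_of_empty (rk : Finset α → ℕ) (h0 : rk ∅ = 0) :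
    GoodPartition (∅ : Finset α) rk {((∅ : Finset α), (∅ : Finset α))} := by
  constructor
  · intro p hp
    rw [mem_singleton] at hp
    subst hp
    refine ⟨∅, ∅, ⟨Subset.rfl, Subset.rfl, disjoint_empty_left _, by simp, ?_⟩, rfl, by simp [h0]⟩
    intro A h1 h2
    have : A = ∅ := subset_empty.1 h2
    simp [this]
  · intro A hA
    have hA0 : A = ∅ := subset_empty.1 hA
    subst hA0
    refine ⟨(∅, ∅), ⟨mem_singleton_self _, Subset.rfl, Subset.rfl⟩, ?_⟩
    intro q hq
    exact mem_singleton.1 hq.1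

lemma exists_molecule_partition (n : ℕ) : ∀ (M : Finset α) (rk : Finset α → ℕ), M.card ≤ n →
    IsMatroidRank M rk → ∃ P, GoodPartition M rk P := by
  induction n with
  | zero =>
    intro M rk hcard hrk
    have hM : M = ∅ := card_eq_zero.1 (Nat.le_zero.1 hcard)
    subst hM
    exact ⟨_, partition_of_empty rk hrk.1⟩
  | succ n ih =>
    intro M rk hcard hrk
    rcases M.eq_empty_or_nonempty with hM | ⟨e, he⟩
    · subst hM; exact ⟨_, partition_of_empty rk hrk.1⟩
    obtain ⟨h0, hmono, hsub, hunit⟩ := hrk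
    set M' := M.erase e with hM'def
    have heM' : e ∉ M' := notMem_erase e M
    have hM'M : M' ⊆ M := erase_subset e M
    have hins : insert e M' = M := insert_erase he
    have hcard' : M'.card ≤ n := by
      have h1 : M'.card = M.card - 1 := card_erase_of_mem he
      have h2 : 0 < M.card := card_pos.2 ⟨e, he⟩
      omega
    have hrkdel : IsMatroidRank M' rk :=
      ⟨h0, fun A B hAB hBM => hmono A B hAB (hBM.trans hM'M),
        fun A B hA hB => hsub A B (hA.trans hM'M) (hB.trans hM'M),
        fun A hA a ha => hunit A (hA.trans hM'M) a (hM'M ha)⟩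
    have heM : e ∈ M := he
    have hrkMle : rk M ≤ rk M' + 1 := by
      have := hunit M' hM'M e heM; rwa [hins] at this
    have hrkM'le : rk M' ≤ rk M := hmono M' M hM'M Subset.rfl
    by_cases hloop : rk {e} = 0
    · -- e is a loop
      have hli : ∀ A : Finset α, A ⊆ M' → rk (insert e A) = rk A := by
        intro A hA
        have h1 := hsub A {e} (hA.trans hM'M) (singleton_subset_iff.2 heM)
        have h2 : A ∪ {e} = insert e A := by ext x; simp [or_comm]
        have h3 : rk (A ∩ {e}) ≤ rk A := hmono _ A inter_subset_left (hA.trans hM'M)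
        have h4 : rk A ≤ rk (insert e A) :=
          hmono A (insert e A) (subset_insert e A)
            (insert_subset heM (hA.trans hM'M))
        rw [h2] at h1
        omega
      have hrkMM' : rk M = rk M' := by
        have := hli M' Subset.rfl; rw [hins] at this; omega
      obtain ⟨P', hP1', hP2'⟩ := ih M' rk hcard' hrkdel
      refine ⟨P'.image (fun p => (p.1, insert e p.2)), ?_, ?_⟩
      · rintro q hq
        simp only [mem_image] at hq
        obtain ⟨p, hp, rfl⟩ := hq
        obtain ⟨F, T, ⟨hab, hbM', hFT, hFTeq, hrank⟩, hs, hr⟩ := hP1' p hp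
        have hFb : F ⊆ p.2 := (hFTeq ▸ subset_union_left (s₂ := T)).trans sdiff_subset
        have hTb : T ⊆ p.2 := (hFTeq ▸ subset_union_right (s₁ := F)).trans sdiff_subset
        have heF : e ∉ F := fun h => heM' (hbM' (hFb h))
        have hea : e ∉ p.1 := fun h => heM' (hbM' (hab h))
        refine ⟨F, insert e T, ⟨hab.trans (subset_insert e p.2),
          insert_subset heM (hbM'.trans hM'M), ?_, ?_, ?_⟩, ?_, hr⟩
        · rw [disjoint_insert_right]
          exact ⟨heF, hFT⟩
        · rw [union_insert, hFTeq]
          ext x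
          simp only [mem_insert, mem_sdiff]
          constructor
          · rintro (rfl | ⟨h1, h2⟩)
            · exact ⟨Or.inl rfl, hea⟩
            · exact ⟨Or.inr h1, h2⟩
          · rintro ⟨(rfl | h1), h2⟩
            · exact Or.inl rfl
            · exact Or.inr ⟨h1, h2⟩
        · intro A hA1 hA2
          by_cases heA : e ∈ A
          · have hAer : A.erase e ⊆ p.2 := by
              intro x hx
              rw [mem_erase] at hx
              rcases mem_insert.1 (hA2 hx.2) with h | h
              · exact absurd h hx.1
              · exact h
            have h1 : p.1 ⊆ A.erase e := subset_erase.2 ⟨hA1, hea⟩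
            have h2 : rk A = rk (A.erase e) := by
              have := hli (A.erase e) (hAer.trans hbM')
              rw [insert_erase heA] at this; exact this
            have h3 : A ∩ F = (A.erase e) ∩ F := by
              ext x
              simp only [mem_inter, mem_erase]
              exact ⟨fun ⟨u, v⟩ => ⟨⟨fun hxe => heF (hxe ▸ v), u⟩, v⟩,
                fun ⟨⟨_, u⟩, v⟩ => ⟨u, v⟩⟩
            rw [h2, h3, hrank (A.erase e) h1 hAer]
          · have hA2' : A ⊆ p.2 := fun x hx => by
              rcases mem_insert.1 (hA2 hx) with h | h
              · exact absurd (h ▸ hx) heA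
              · exact h
            exact hrank A hA1 hA2'
        · rw [hli p.2 hbM', hs, hrkMM']
      · intro A hA
        have hAer : A.erase e ⊆ M' := fun x hx => by
          rw [mem_erase] at hx ⊢
          exact ⟨hx.1, hA hx.2⟩
        obtain ⟨p, ⟨hp, hp1, hp2⟩, hpu⟩ := hP2' (A.erase e) hAer
        have hep2 : e ∉ p.2 := fun h =>
          heM' ((hP1' p hp).choose_spec.choose_spec.1.2.1 h)
        refine ⟨(p.1, insert e p.2), ⟨mem_image_of_mem _ hp, ?_, ?_⟩, ?_⟩
        · exact hp1.trans (erase_subset e A)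
        · intro x hx
          by_cases hxe : x = e
          · exact hxe ▸ mem_insert_self e p.2
          · exact mem_insert_of_mem (hp2 (mem_erase.2 ⟨hxe, hx⟩))
        · rintro q ⟨hq, hq1, hq2⟩
          simp only [mem_image] at hq
          obtain ⟨p', hp', rfl⟩ := hq
          have hbM'2 : p'.2 ⊆ M' := (hP1' p' hp').choose_spec.choose_spec.1.2.1
          have haM'2 : p'.1 ⊆ M' :=
            ((hP1' p' hp').choose_spec.choose_spec.1.1).trans hbM'2
          have hea' : e ∉ p'.1 := fun h => heM' (haM'2 h)
          have h1 : p'.1 ⊆ A.erase e := subset_erase.2 ⟨hq1, hea'⟩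
          have h2 : A.erase e ⊆ p'.2 := by
            intro x hx
            rw [mem_erase] at hx
            rcases mem_insert.1 (hq2 hx.2) with h | h
            · exact absurd h hx.1
            · exact h
          have := hpu p' ⟨hp', h1, h2⟩
          rw [this]
    · by_cases hcol : rk M' + 1 = rk M
      · -- e is a coloop
        have hci : ∀ A : Finset α, A ⊆ M' → rk (insert e A) = rk A + 1 := by
          intro A hA
          have hup := hunit A (hA.trans hM'M) e heM
          have h1 := hsub (insert e A) M' (insert_subset heM (hA.trans hM'M)) hM'M
          have eq1 : insert e A ∪ M' = M := by
            rw [insert_union, union_eq_right.2 hA, hins]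
          have eq2 : insert e A ∩ M' = A := by
            rw [insert_inter_of_notMem heM', inter_eq_left.2 hA]
          rw [eq1, eq2] at h1
          omega
        obtain ⟨P', hP1', hP2'⟩ := ih M' rk hcard' hrkdel
        refine ⟨P'.image (fun p => (p.1, insert e p.2)), ?_, ?_⟩
        · rintro q hq
          simp only [mem_image] at hq
          obtain ⟨p, hp, rfl⟩ := hq
          dsimp only
          obtain ⟨F, T, ⟨hab, hbM', hFT, hFTeq, hrank⟩, hs, hr⟩ := hP1' p hp
          have hFb : F ⊆ p.2 := (hFTeq ▸ subset_union_left (s₂ := T)).trans sdiff_subset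
          have hTb : T ⊆ p.2 := (hFTeq ▸ subset_union_right (s₁ := F)).trans sdiff_subset
          have heF : e ∉ F := fun h => heM' (hbM' (hFb h))
          have heT : e ∉ T := fun h => heM' (hbM' (hTb h))
          have hea : e ∉ p.1 := fun h => heM' (hbM' (hab h))
          refine ⟨insert e F, T, ⟨hab.trans (subset_insert e p.2),
            insert_subset heM (hbM'.trans hM'M), ?_, ?_, ?_⟩, ?_, hr⟩
          · rw [disjoint_insert_left]
            exact ⟨heT, hFT⟩
          · rw [insert_union, hFTeq]
            ext x
            simp only [mem_insert, mem_sdiff]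
            constructor
            · rintro (rfl | ⟨h1, h2⟩)
              · exact ⟨Or.inl rfl, hea⟩
              · exact ⟨Or.inr h1, h2⟩
            · rintro ⟨(rfl | h1), h2⟩
              · exact Or.inl rfl
              · exact Or.inr ⟨h1, h2⟩
          · intro A hA1 hA2
            by_cases heA : e ∈ A
            · have hAer : A.erase e ⊆ p.2 := by
                intro x hx
                rw [mem_erase] at hx
                rcases mem_insert.1 (hA2 hx.2) with h | h
                · exact absurd h hx.1
                · exact h
              have h1 : p.1 ⊆ A.erase e := subset_erase.2 ⟨hA1, hea⟩
              have h2 : rk A = rk (A.erase e) + 1 := by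
                have := hci (A.erase e) (hAer.trans hbM')
                rw [insert_erase heA] at this; exact this
              have h3 : A ∩ insert e F = insert e ((A.erase e) ∩ F) := by
                ext x
                simp only [mem_inter, mem_insert, mem_erase]
                constructor
                · rintro ⟨hxA, rfl | hxF⟩
                  · exact Or.inl rfl
                  · exact Or.inr ⟨⟨fun hxe => heF (hxe ▸ hxF), hxA⟩, hxF⟩
                · rintro (rfl | ⟨⟨hne, hxA⟩, hxF⟩)
                  · exact ⟨heA, Or.inl rfl⟩
                  · exact ⟨hxA, Or.inr hxF⟩
              have h4 : e ∉ (A.erase e) ∩ F := fun h => heF (mem_inter.1 h).2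
              rw [h2, h3, card_insert_of_notMem h4, hrank (A.erase e) h1 hAer]
              omega
            · have hA2' : A ⊆ p.2 := fun x hx => by
                rcases mem_insert.1 (hA2 hx) with h | h
                · exact absurd (h ▸ hx) heA
                · exact h
              have h3 : A ∩ insert e F = A ∩ F := by
                ext x
                simp only [mem_inter, mem_insert]
                constructor
                · rintro ⟨hxA, rfl | hxF⟩
                  · exact absurd hxA heA
                  · exact ⟨hxA, hxF⟩
                · rintro ⟨hxA, hxF⟩
                  exact ⟨hxA, Or.inr hxF⟩
              rw [h3]
              exact hrank A hA1 hA2'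
          · rw [hci p.2 hbM', hs]
            omega
        · intro A hA
          have hAer : A.erase e ⊆ M' := fun x hx => by
            rw [mem_erase] at hx ⊢
            exact ⟨hx.1, hA hx.2⟩
          obtain ⟨p, ⟨hp, hp1, hp2⟩, hpu⟩ := hP2' (A.erase e) hAer
          refine ⟨(p.1, insert e p.2), ⟨mem_image_of_mem _ hp, ?_, ?_⟩, ?_⟩
          · exact hp1.trans (erase_subset e A)
          · intro x hx
            by_cases hxe : x = e
            · exact hxe ▸ mem_insert_self e p.2
            · exact mem_insert_of_mem (hp2 (mem_erase.2 ⟨hxe, hx⟩))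
          · rintro q ⟨hq, hq1, hq2⟩
            simp only [mem_image] at hq
            obtain ⟨p', hp', rfl⟩ := hq
            have hbM'2 : p'.2 ⊆ M' := (hP1' p' hp').choose_spec.choose_spec.1.2.1
            have haM'2 : p'.1 ⊆ M' :=
              ((hP1' p' hp').choose_spec.choose_spec.1.1).trans hbM'2
            have hea' : e ∉ p'.1 := fun h => heM' (haM'2 h)
            have h1 : p'.1 ⊆ A.erase e := subset_erase.2 ⟨hq1, hea'⟩
            have h2 : A.erase e ⊆ p'.2 := by
              intro x hx
              rw [mem_erase] at hx
              rcases mem_insert.1 (hq2 hx.2) with h | h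
              · exact absurd h hx.1
              · exact h
            have := hpu p' ⟨hp', h1, h2⟩
            rw [this]
      · -- e is neither a loop nor a coloop
        have hMeq : rk M' = rk M := by omega
        have h1e : insert e (∅ : Finset α) = {e} := rfl
        have hone : rk {e} = 1 := by
          have := hunit ∅ (empty_subset M) e heM
          rw [h1e, h0] at this
          omega
        have h1le : ∀ A : Finset α, A ⊆ M' → 1 ≤ rk (insert e A) := by
          intro A hA
          have := hmono {e} (insert e A) (singleton_subset_iff.2 (mem_insert_self e A))
            (insert_subset heM (hA.trans hM'M))
          omega
        have hrkc : IsMatroidRank M' (fun A => rk (insert e A) - 1) := by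
          refine ⟨?_, ?_, ?_, ?_⟩
          · show rk (insert e ∅) - 1 = 0
            rw [h1e, hone]
          · intro A B hAB hBM
            show rk (insert e A) - 1 ≤ rk (insert e B) - 1
            have := hmono (insert e A) (insert e B) (insert_subset_insert e hAB)
              (insert_subset heM (hBM.trans hM'M))
            omega
          · intro A B hA hB
            show rk (insert e (A ∪ B)) - 1 + (rk (insert e (A ∩ B)) - 1)
              ≤ rk (insert e A) - 1 + (rk (insert e B) - 1)
            have h1 := hsub (insert e A) (insert e B)
              (insert_subset heM (hA.trans hM'M)) (insert_subset heM (hB.trans hM'M))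
            have eqU : insert e A ∪ insert e B = insert e (A ∪ B) := by
              rw [insert_union, union_insert, insert_idem]
            have eqI : insert e A ∩ insert e B = insert e (A ∩ B) :=
              (insert_inter_distrib A B e).symm
            rw [eqU, eqI] at h1
            have g1 := h1le (A ∪ B) (union_subset hA hB)
            have g2 := h1le (A ∩ B) (inter_subset_left.trans hA)
            have g3 := h1le A hA
            have g4 := h1le B hB
            omega
          · intro A hA a ha
            show rk (insert e (insert a A)) - 1 ≤ rk (insert e A) - 1 + 1
            have h1 := hunit (insert e A) (insert_subset heM (hA.trans hM'M)) a (hM'M ha)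
            have h2 : insert e (insert a A) = insert a (insert e A) := Finset.insert_comm e a A
            rw [← h2] at h1
            have := h1le A hA
            omega
        have hc2 : ∀ B : Finset α, B ⊆ M' → rk (insert e B) = (rk (insert e B) - 1) + 1 :=
          fun B hB => by have := h1le B hB; omega
        obtain ⟨P1, hP11, hP12⟩ := ih M' rk hcard' hrkdel
        obtain ⟨P2, hP21, hP22⟩ := ih M' (fun A => rk (insert e A) - 1) hcard' hrkc
        refine ⟨P1 ∪ P2.image (fun p => (insert e p.1, insert e p.2)), ?_, ?_⟩
        · rintro q hq
          rcases mem_union.1 hq with hq | hq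
          · obtain ⟨F, T, ⟨hab, hbM', hFT, hFTeq, hrank⟩, hs, hr⟩ := hP11 q hq
            exact ⟨F, T, ⟨hab, hbM'.trans hM'M, hFT, hFTeq, hrank⟩, by rw [hs, hMeq], hr⟩
          · simp only [mem_image] at hq
            obtain ⟨p, hp, rfl⟩ := hq
            dsimp only
            obtain ⟨F, T, ⟨hab, hbM', hFT, hFTeq, hrank⟩, hs, hr⟩ := hP21 p hp
            have hs' : rk (insert e p.2) - 1 = rk (insert e M') - 1 := hs
            have hr' : rk (insert e p.1) - 1 = p.1.card := hr
            have hFb : F ⊆ p.2 := (hFTeq ▸ subset_union_left (s₂ := T)).trans sdiff_subset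
            have heF : e ∉ F := fun h => heM' (hbM' (hFb h))
            have hea : e ∉ p.1 := fun h => heM' (hbM' (hab h))
            have heb : e ∉ p.2 := fun h => heM' (hbM' h)
            have hp1M : p.1 ⊆ M' := hab.trans hbM'
            refine ⟨F, T, ⟨insert_subset_insert e hab,
              insert_subset heM (hbM'.trans hM'M), hFT, ?_, ?_⟩, ?_, ?_⟩
            · rw [hFTeq]
              ext x
              simp only [mem_sdiff, mem_insert]
              constructor
              · rintro ⟨h1, h2⟩
                refine ⟨Or.inr h1, ?_⟩
                rintro (rfl | hx)
                · exact heb h1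
                · exact h2 hx
              · rintro ⟨rfl | h1, hn⟩
                · exact absurd (Or.inl rfl) hn
                · exact ⟨h1, fun hx => hn (Or.inr hx)⟩
            · intro A hA1 hA2
              have heA : e ∈ A := hA1 (mem_insert_self e p.1)
              have hpa : p.1 ⊆ A.erase e :=
                subset_erase.2 ⟨(subset_insert e p.1).trans hA1, hea⟩
              have hab2 : A.erase e ⊆ p.2 := by
                intro x hx
                rw [mem_erase] at hx
                rcases mem_insert.1 (hA2 hx.2) with h | h
                · exact absurd h hx.1
                · exact h
              have h2 : rk A = rk (insert e (A.erase e)) := by rw [insert_erase heA]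
              have h3 := hc2 (A.erase e) (hab2.trans hbM')
              have h4 : rk (insert e (A.erase e)) - 1
                  = (rk (insert e p.1) - 1) + ((A.erase e) ∩ F).card :=
                hrank (A.erase e) hpa hab2
              have h5 := hc2 p.1 hp1M
              have h6 : A ∩ F = (A.erase e) ∩ F := by
                ext x
                simp only [mem_inter, mem_erase]
                exact ⟨fun ⟨u, v⟩ => ⟨⟨fun hxe => heF (hxe ▸ v), u⟩, v⟩,
                  fun ⟨⟨_, u⟩, v⟩ => ⟨u, v⟩⟩
              rw [h2, h6]
              omega
            · have h7 := hc2 p.2 hbM'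
              have h8 := hc2 M' Subset.rfl
              rw [hins] at h8
              rw [hins] at hs'
              omega
            · have h9 := hc2 p.1 hp1M
              rw [card_insert_of_notMem hea]
              omega
        · intro A hA
          by_cases heA : e ∈ A
          · have hAer : A.erase e ⊆ M' := fun x hx => by
              rw [mem_erase] at hx ⊢
              exact ⟨hx.1, hA hx.2⟩
            obtain ⟨p, ⟨hp, hp1, hp2⟩, hpu⟩ := hP22 (A.erase e) hAer
            refine ⟨(insert e p.1, insert e p.2),
              ⟨mem_union_right _ (mem_image_of_mem _ hp), ?_, ?_⟩, ?_⟩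
            · exact insert_subset heA (hp1.trans (erase_subset e A))
            · intro x hx
              by_cases hxe : x = e
              · exact hxe ▸ mem_insert_self e p.2
              · exact mem_insert_of_mem (hp2 (mem_erase.2 ⟨hxe, hx⟩))
            · rintro q ⟨hq, hq1, hq2⟩
              rcases mem_union.1 hq with hq | hq
              · have hbM'2 : q.2 ⊆ M' := (hP11 q hq).choose_spec.choose_spec.1.2.1
                exact absurd (hbM'2 (hq2 heA)) heM'
              · simp only [mem_image] at hq
                obtain ⟨p', hp', rfl⟩ := hq
                have hbM'2 : p'.2 ⊆ M' := (hP21 p' hp').choose_spec.choose_spec.1.2.1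
                have haM'2 : p'.1 ⊆ M' :=
                  ((hP21 p' hp').choose_spec.choose_spec.1.1).trans hbM'2
                have hea' : e ∉ p'.1 := fun h => heM' (haM'2 h)
                have h1 : p'.1 ⊆ A.erase e :=
                  subset_erase.2 ⟨(subset_insert e p'.1).trans hq1, hea'⟩
                have h2 : A.erase e ⊆ p'.2 := by
                  intro x hx
                  rw [mem_erase] at hx
                  rcases mem_insert.1 (hq2 hx.2) with h | h
                  · exact absurd h hx.1
                  · exact h
                have := hpu p' ⟨hp', h1, h2⟩
                rw [this]
          · have hAM' : A ⊆ M' := fun x hx => mem_erase.2 ⟨fun h => heA (h ▸ hx), hA hx⟩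
            obtain ⟨p, ⟨hp, hp1, hp2⟩, hpu⟩ := hP12 A hAM'
            refine ⟨p, ⟨mem_union_left _ hp, hp1, hp2⟩, ?_⟩
            rintro q ⟨hq, hq1, hq2⟩
            rcases mem_union.1 hq with hq | hq
            · exact hpu q ⟨hq, hq1, hq2⟩
            · simp only [mem_image] at hq
              obtain ⟨p', hp', rfl⟩ := hq
              exact absurd (hq1 (mem_insert_self e p'.1)) heA

lemma molecule_coeff_nonneg (M : Finset α) (rk : Finset α → ℕ) (m : Finset α → ℝ)
    (hrk : IsMatroidRank M rk) (hP : PositivityAxiom M rk m)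
    {R S F T : Finset α} (hmol : IsMolecule M rk R S F T) (hS : rk S = rk M)
    (hR : rk R = R.card) (d : Fin 2 →₀ ℕ) :
    0 ≤ MvPolynomial.coeff d (∑ A ∈ S.powerset.filter (fun A => R ⊆ A),
        MvPolynomial.C (m A) * ((MvPolynomial.X 0 : MvPolynomial (Fin 2) ℝ) - 1) ^ (rk M - rk A) *
          ((MvPolynomial.X 1 : MvPolynomial (Fin 2) ℝ) - 1) ^ (A.card - rk A)) := by
  obtain ⟨hRS, hSM, hFT, hFTeq, hrank⟩ := hmol
  obtain ⟨h0, hmono, hsub, hunit⟩ := hrk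
  have hFTS : F ∪ T ⊆ S := hFTeq ▸ sdiff_subset
  have hFS : F ⊆ S := subset_union_left.trans hFTS
  have hTS : T ⊆ S := subset_union_right.trans hFTS
  have hdisjR : Disjoint R (F ∪ T) := hFTeq ▸ disjoint_sdiff
  have hRF : Disjoint R F := hdisjR.mono_right subset_union_left
  have hRT : Disjoint R T := hdisjR.mono_right subset_union_right
  have hSeq : R ∪ (F ∪ T) = S := by rw [hFTeq]; exact union_sdiff_of_subset hRS
  have hrkM : rk M = rk R + F.card := by
    rw [← hS, hrank S hRS Subset.rfl, inter_eq_right.2 hFS]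
  -- memberships of F ∪ T
  have hmemFT : ∀ x, x ∈ F ∪ T ↔ x ∈ S ∧ x ∉ R := by
    intro x; rw [hFTeq]; simp [mem_sdiff]
  -- Step 1+2 : rewrite the polynomial
  have e12 : (∑ A ∈ S.powerset.filter (fun A => R ⊆ A),
        MvPolynomial.C (m A) * ((MvPolynomial.X 0 : MvPolynomial (Fin 2) ℝ) - 1) ^ (rk M - rk A) *
          ((MvPolynomial.X 1 : MvPolynomial (Fin 2) ℝ) - 1) ^ (A.card - rk A))
      = ∑ F1 ∈ F.powerset, ∑ T1 ∈ T.powerset,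
          MvPolynomial.C (m (R ∪ (F1 ∪ T1))) *
            ((MvPolynomial.X 0 : MvPolynomial (Fin 2) ℝ) - 1) ^ ((F \ F1).card) *
            ((MvPolynomial.X 1 : MvPolynomial (Fin 2) ℝ) - 1) ^ (T1.card) := by
    have step1 : (∑ A ∈ S.powerset.filter (fun A => R ⊆ A),
          MvPolynomial.C (m A) * ((MvPolynomial.X 0 : MvPolynomial (Fin 2) ℝ) - 1) ^ (rk M - rk A) *
            ((MvPolynomial.X 1 : MvPolynomial (Fin 2) ℝ) - 1) ^ (A.card - rk A))
        = ∑ A ∈ S.powerset.filter (fun A => R ⊆ A),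
            MvPolynomial.C (m A) * ((MvPolynomial.X 0 : MvPolynomial (Fin 2) ℝ) - 1) ^ ((F \ A).card) *
              ((MvPolynomial.X 1 : MvPolynomial (Fin 2) ℝ) - 1) ^ ((A ∩ T).card) := by
      refine Finset.sum_congr rfl fun A hA => ?_
      simp only [mem_filter, mem_powerset] at hA
      obtain ⟨hAS, hRA⟩ := hA
      have hrkA : rk A = rk R + (A ∩ F).card := hrank A hRA hAS
      have hAFle : (A ∩ F).card ≤ F.card := card_le_card inter_subset_right
      have hFA : F \ A = F \ (A ∩ F) := by ext x; simp only [mem_sdiff, mem_inter]; tauto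
      have h1 : rk M - rk A = (F \ A).card := by
        rw [hFA, card_sdiff_of_subset inter_subset_right]; omega
      have hsplit : A \ R = (A ∩ F) ∪ (A ∩ T) := by
        ext x
        simp only [mem_sdiff, mem_union, mem_inter]
        constructor
        · intro ⟨hxA, hxR⟩
          have := (hmemFT x).2 ⟨hAS hxA, hxR⟩
          simp only [mem_union] at this; tauto
        · rintro (⟨hxA, hxF⟩ | ⟨hxA, hxT⟩)
          · exact ⟨hxA, fun hxR => disjoint_left.1 hRF hxR hxF⟩
          · exact ⟨hxA, fun hxR => disjoint_left.1 hRT hxR hxT⟩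
      have hcardA : A.card = R.card + ((A ∩ F).card + (A ∩ T).card) := by
        have h2 : (A \ R).card = A.card - R.card := card_sdiff_of_subset hRA
        have h3 : ((A ∩ F) ∪ (A ∩ T)).card = (A ∩ F).card + (A ∩ T).card :=
          card_union_of_disjoint (hFT.mono inter_subset_right inter_subset_right)
        have h4 : R.card ≤ A.card := card_le_card hRA
        rw [hsplit] at h2; omega
      have h2 : A.card - rk A = (A ∩ T).card := by omega
      rw [h1, h2]
    rw [step1, ← hSeq,
      sum_interval R (F ∪ T) hdisjR
        (fun B => MvPolynomial.C (m B) * ((MvPolynomial.X 0 : MvPolynomial (Fin 2) ℝ) - 1) ^ ((F \ B).card) *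
          ((MvPolynomial.X 1 : MvPolynomial (Fin 2) ℝ) - 1) ^ ((B ∩ T).card)),
      sum_powerset_union F T hFT]
    refine Finset.sum_congr rfl fun F1 hF1 => Finset.sum_congr rfl fun T1 hT1 => ?_
    simp only [mem_powerset] at hF1 hT1
    have e1 : F \ (R ∪ (F1 ∪ T1)) = F \ F1 := by
      ext x
      simp only [mem_sdiff, mem_union]
      constructor
      · intro ⟨hxF, h⟩; exact ⟨hxF, fun h' => h (Or.inr (Or.inl h'))⟩
      · intro ⟨hxF, h⟩
        refine ⟨hxF, fun h' => ?_⟩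
        rcases h' with h' | h' | h'
        · exact disjoint_left.1 hRF h' hxF
        · exact h h'
        · exact disjoint_left.1 hFT hxF (hT1 h')
    have e2 : (R ∪ (F1 ∪ T1)) ∩ T = T1 := by
      ext x
      simp only [mem_inter, mem_union]
      constructor
      · rintro ⟨h' | h' | h', hxT⟩
        · exact absurd hxT (disjoint_left.1 hRT h')
        · exact absurd hxT (disjoint_left.1 hFT (hF1 h'))
        · exact h'
      · intro h; exact ⟨Or.inr (Or.inr h), hT1 h⟩
    rw [e1, e2]
  rw [e12]
  -- Step 3 : compute the coefficient as a quadruple real sum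
  have step3 : MvPolynomial.coeff d (∑ F1 ∈ F.powerset, ∑ T1 ∈ T.powerset,
        MvPolynomial.C (m (R ∪ (F1 ∪ T1))) *
          ((MvPolynomial.X 0 : MvPolynomial (Fin 2) ℝ) - 1) ^ ((F \ F1).card) *
          ((MvPolynomial.X 1 : MvPolynomial (Fin 2) ℝ) - 1) ^ (T1.card))
      = ∑ F1 ∈ F.powerset, ∑ T1 ∈ T.powerset, ∑ F2 ∈ (F \ F1).powerset, ∑ T2 ∈ T1.powerset,
          m (R ∪ (F1 ∪ T1)) *
            ((-1 : ℝ) ^ (((F \ F1) \ F2).card) * (-1 : ℝ) ^ ((T1 \ T2).card)) *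
            (if (Finsupp.single 0 F2.card + Finsupp.single 1 T2.card : Fin 2 →₀ ℕ) = d
              then 1 else 0) := by
    rw [MvPolynomial.coeff_sum]
    refine Finset.sum_congr rfl fun F1 _ => ?_
    rw [MvPolynomial.coeff_sum]
    refine Finset.sum_congr rfl fun T1 _ => ?_
    rw [mul_assoc, pow_card_expand ((MvPolynomial.X 0 : MvPolynomial (Fin 2) ℝ)) (F \ F1),
      pow_card_expand ((MvPolynomial.X 1 : MvPolynomial (Fin 2) ℝ)) T1,
      Finset.sum_mul_sum]
    simp only [Finset.mul_sum, MvPolynomial.coeff_sum]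
    refine Finset.sum_congr rfl fun F2 _ => ?_
    refine Finset.sum_congr rfl fun T2 _ => ?_
    rw [← mul_assoc]
    exact coeff_atom d _ _ _ _ _
  rw [step3, sum_swap4 F T]
  -- Step 4 : per (F2, T2), nonnegativity
  refine Finset.sum_nonneg fun F2 hF2 => Finset.sum_nonneg fun T2 hT2 => ?_
  simp only [mem_powerset] at hF2 hT2
  have hF2F : F2 ⊆ F := hF2
  have hT2T : T2 ⊆ T := hT2
  have pull : ∑ F1 ∈ (F \ F2).powerset, ∑ T1 ∈ T.powerset.filter (fun T1 => T2 ⊆ T1),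
        m (R ∪ (F1 ∪ T1)) *
          ((-1 : ℝ) ^ (((F \ F1) \ F2).card) * (-1 : ℝ) ^ ((T1 \ T2).card)) *
          (if (Finsupp.single 0 F2.card + Finsupp.single 1 T2.card : Fin 2 →₀ ℕ) = d
            then 1 else 0)
      = (∑ F1 ∈ (F \ F2).powerset, ∑ T1 ∈ T.powerset.filter (fun T1 => T2 ⊆ T1),
          m (R ∪ (F1 ∪ T1)) *
            ((-1 : ℝ) ^ (((F \ F1) \ F2).card) * (-1 : ℝ) ^ ((T1 \ T2).card))) *
          (if (Finsupp.single 0 F2.card + Finsupp.single 1 T2.card : Fin 2 →₀ ℕ) = d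
            then 1 else 0) := by
    rw [Finset.sum_mul]
    exact Finset.sum_congr rfl fun F1 _ => by rw [Finset.sum_mul]
  rw [pull]
  have hind : (0:ℝ) ≤ (if (Finsupp.single 0 F2.card + Finsupp.single 1 T2.card :
      Fin 2 →₀ ℕ) = d then 1 else 0) := by split_ifs <;> norm_num
  refine mul_nonneg ?_ hind
  -- the inner double sum is ρ of a molecule
  have hT2F : Disjoint T2 F := (hFT.symm.mono_left hT2T)
  have hS'S : (R ∪ T2) ∪ ((F \ F2) ∪ (T \ T2)) ⊆ S :=
    union_subset (union_subset hRS (hT2T.trans hTS))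
      (union_subset (sdiff_subset.trans hFS) (sdiff_subset.trans hTS))
  have hmol' : IsMolecule M rk (R ∪ T2) ((R ∪ T2) ∪ ((F \ F2) ∪ (T \ T2)))
      (F \ F2) (T \ T2) := by
    refine ⟨subset_union_left, hS'S.trans hSM, hFT.mono sdiff_subset sdiff_subset, ?_, ?_⟩
    · ext x
      simp only [mem_union, mem_sdiff]
      have i1 : x ∈ F → x ∉ R := fun h => disjoint_right.1 hRF h
      have i2 : x ∈ F → x ∉ T := fun h => disjoint_left.1 hFT h
      have i3 : x ∈ T → x ∉ R := fun h => disjoint_right.1 hRT h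
      have i4 : x ∈ T2 → x ∈ T := fun h => hT2T h
      constructor
      · rintro (⟨hF', hF2'⟩ | ⟨hT', hT2'⟩)
        · refine ⟨Or.inr (Or.inl ⟨hF', hF2'⟩), ?_⟩
          rintro (h | h)
          · exact i1 hF' h
          · exact i2 hF' (i4 h)
        · refine ⟨Or.inr (Or.inr ⟨hT', hT2'⟩), ?_⟩
          rintro (h | h)
          · exact i3 hT' h
          · exact hT2' h
      · rintro ⟨(h | h) | h, hn⟩
        · exact absurd (Or.inl h) hn
        · exact absurd (Or.inr h) hn
        · exact h
    · intro A hRA hAS'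
      have hRA' : R ⊆ A := subset_union_left.trans hRA
      have base : rk A = rk R + (A ∩ F).card := hrank A hRA' (hAS'.trans hS'S)
      have hRT2 : rk (R ∪ T2) = rk R := by
        have h1 := hrank (R ∪ T2) subset_union_left
          (union_subset hRS (hT2T.trans hTS))
        have h2 : (R ∪ T2) ∩ F = ∅ := by
          rw [← disjoint_iff_inter_eq_empty]
          exact disjoint_union_left.2 ⟨hRF.symm.symm, hT2F⟩
        rw [h1, h2, card_empty]; omega
      have hAF : A ∩ F = A ∩ (F \ F2) := by
        ext x
        simp only [mem_inter, mem_sdiff]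
        constructor
        · intro ⟨hxA, hxF⟩
          refine ⟨hxA, hxF, fun hxF2 => ?_⟩
          have := hAS' hxA
          simp only [mem_union, mem_sdiff] at this
          rcases this with (h | h) | (h | h)
          · exact disjoint_left.1 hRF h hxF
          · exact disjoint_left.1 hFT hxF (hT2T h)
          · exact h.2 hxF2
          · exact disjoint_left.1 hFT hxF h.1
        · intro ⟨hxA, hxF, _⟩; exact ⟨hxA, hxF⟩
      rw [base, hRT2, hAF]
  have hρ := hP (R ∪ T2) ((R ∪ T2) ∪ ((F \ F2) ∪ (T \ T2))) (F \ F2) (T \ T2) hmol'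
  have hdisj1 : Disjoint (R ∪ T2) ((F \ F2) ∪ (T \ T2)) := by
    refine disjoint_union_left.2 ⟨?_, ?_⟩
    · exact disjoint_union_right.2 ⟨hRF.mono_right sdiff_subset, hRT.mono_right sdiff_subset⟩
    · exact disjoint_union_right.2 ⟨hT2F.mono_right sdiff_subset, disjoint_sdiff⟩
  rw [sum_interval (R ∪ T2) ((F \ F2) ∪ (T \ T2)) hdisj1,
    sum_powerset_union (F \ F2) (T \ T2) (hFT.mono sdiff_subset sdiff_subset)] at hρ
  simp only [Finset.mul_sum] at hρ
  refine le_of_le_of_eq hρ ?_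
  -- identify the two double sums
  have hTeq : T2 ∪ (T \ T2) = T := union_sdiff_of_subset hT2T
  refine Finset.sum_congr rfl fun F1 hF1 => ?_
  simp only [mem_powerset] at hF1
  have hF1F : F1 ⊆ F := hF1.trans sdiff_subset
  have hdF1F2 : Disjoint F1 F2 := (subset_sdiff.1 hF1).2
  have hTfilter : T.powerset.filter (fun T1 => T2 ⊆ T1)
      = (T2 ∪ (T \ T2)).powerset.filter (fun T1 => T2 ⊆ T1) := by rw [hTeq]
  rw [hTfilter, sum_interval T2 (T \ T2) disjoint_sdiff]
  refine Finset.sum_congr rfl fun T1' hT1' => ?_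
  simp only [mem_powerset] at hT1'
  have hT1T : T1' ⊆ T := hT1'.trans sdiff_subset
  have hdT2T1 : Disjoint T2 T1' := disjoint_sdiff.mono_right hT1'
  have hAeq : R ∪ (F1 ∪ (T2 ∪ T1')) = (R ∪ T2) ∪ (F1 ∪ T1') := by
    ext x; simp only [mem_union]; tauto
  have hv : (T2 ∪ T1') \ T2 = T1' := union_sdiff_cancel_left hdT2T1
  -- cards
  have c1 : ((F \ F1) \ F2).card = F.card - F1.card - F2.card := by
    have hsub2 : F2 ⊆ F \ F1 := subset_sdiff.2 ⟨hF2F, hdF1F2.symm⟩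
    rw [card_sdiff_of_subset hsub2, card_sdiff_of_subset hF1F]
  have c2 : (T \ T2).card = T.card - T2.card := card_sdiff_of_subset hT2T
  have c3 : (F \ F2).card = F.card - F2.card := card_sdiff_of_subset hF2F
  have hle1 : F1.card ≤ (F \ F2).card := card_le_card hF1
  have hle2 : T1'.card ≤ (T \ T2).card := card_le_card hT1'
  have hle3 : F2.card ≤ F.card := card_le_card hF2F
  have hle4 : T2.card ≤ T.card := card_le_card hT2T
  have cS' : ((R ∪ T2) ∪ ((F \ F2) ∪ (T \ T2))).card
      = (R.card + T2.card) + ((F.card - F2.card) + (T.card - T2.card)) := by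
    rw [card_union_of_disjoint hdisj1, card_union_of_disjoint (hRT.mono_right hT2T),
      card_union_of_disjoint (hFT.mono sdiff_subset sdiff_subset), c2, c3]
  have hdisj2 : Disjoint (R ∪ T2) (F1 ∪ T1') := by
    refine disjoint_union_left.2 ⟨?_, ?_⟩
    · exact disjoint_union_right.2 ⟨hRF.mono_right hF1F, hRT.mono_right hT1T⟩
    · exact disjoint_union_right.2 ⟨hT2F.mono_right hF1F, hdT2T1⟩
  have cA : ((R ∪ T2) ∪ (F1 ∪ T1')).card = (R.card + T2.card) + (F1.card + T1'.card) := by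
    rw [card_union_of_disjoint hdisj2, card_union_of_disjoint (hRT.mono_right hT2T),
      card_union_of_disjoint (hFT.mono hF1F hT1T)]
  have hpar : (((F \ F1) \ F2).card + T1'.card) % 2
      = ((T \ T2).card + (((R ∪ T2) ∪ ((F \ F2) ∪ (T \ T2))).card
          - ((R ∪ T2) ∪ (F1 ∪ T1')).card)) % 2 := by
    rw [c1, c2, cS', cA]; omega
  rw [hAeq, hv, mul_comm ((-1:ℝ) ^ ((F \ F1) \ F2).card) ((-1:ℝ) ^ T1'.card)]
  rw [show m ((R ∪ T2) ∪ (F1 ∪ T1')) * ((-1:ℝ) ^ T1'.card * (-1:ℝ) ^ ((F \ F1) \ F2).card)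
      = ((-1:ℝ) ^ (((F \ F1) \ F2).card + T1'.card)) * m ((R ∪ T2) ∪ (F1 ∪ T1')) by
    rw [pow_add]; ring]
  rw [neg_one_pow_congr' _ _ hpar, pow_add]
  ring

end Aux

/-- **Positivity of the coefficients of the arithmetic Tutte polynomial of a
pseudo-arithmetic matroid**: every coefficient of
`𝔐_M(x,y) = Σ_{A⊆M} m(A)·(x−1)^{rk(M)−rk(A)}·(y−1)^{|A|−rk(A)} ∈ ℝ[x,y]` is nonnegative. -/
theorem arithmetic_tutte_coeff_nonneg {α : Type*} [DecidableEq α]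
    (M : Finset α) (rk : Finset α → ℕ) (m : Finset α → ℝ)
    (hrk : IsMatroidRank M rk) (hm : ∀ A : Finset α, 0 ≤ m A)
    (hP : PositivityAxiom M rk m) :
    ∀ d : Fin 2 →₀ ℕ,
      0 ≤ MvPolynomial.coeff d
        (∑ A ∈ M.powerset,
          MvPolynomial.C (m A) * (MvPolynomial.X 0 - 1) ^ (rk M - rk A) *
            (MvPolynomial.X 1 - 1) ^ (A.card - rk A)) := by
  intro d
  obtain ⟨P, hP1, hP2⟩ := exists_molecule_partition M.card M rk le_rfl hrk
  have hPbiUnion : M.powerset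
      = P.biUnion (fun p => p.2.powerset.filter (fun A => p.1 ⊆ A)) := by
    ext A
    simp only [mem_powerset, mem_biUnion, mem_filter]
    constructor
    · intro hA
      obtain ⟨p, ⟨hp, h1, h2⟩, _⟩ := hP2 A hA
      exact ⟨p, hp, h2, h1⟩
    · rintro ⟨p, hp, h2, h1⟩
      exact h2.trans ((hP1 p hp).choose_spec.choose_spec.1.2.1)
  have hdisj : (↑P : Set (Finset α × Finset α)).PairwiseDisjoint
      (fun p => p.2.powerset.filter (fun A => p.1 ⊆ A)) := by
    intro p hp q hq hpq
    simp only [Function.onFun]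
    rw [Finset.disjoint_left]
    intro A hAp hAq
    simp only [mem_filter, mem_powerset] at hAp hAq
    have hAM : A ⊆ M := hAp.1.trans ((hP1 p hp).choose_spec.choose_spec.1.2.1)
    obtain ⟨r, hr, hru⟩ := hP2 A hAM
    exact hpq ((hru p ⟨hp, hAp.2, hAp.1⟩).trans (hru q ⟨hq, hAq.2, hAq.1⟩).symm)
  rw [hPbiUnion, Finset.sum_biUnion hdisj, MvPolynomial.coeff_sum]
  refine Finset.sum_nonneg fun p hp => ?_
  obtain ⟨F, T, hmol, hs, hr⟩ := hP1 p hp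
  exact molecule_coeff_nonneg M rk m ⟨hrk.1, hrk.2.1, hrk.2.2.1, hrk.2.2.2⟩ hP hmol hs hr d
end

section
/- Let (M, rk, m) be a pseudo-arithmetic matroid. Then 𝔐_M(0,0) = Σ_{A⊆M} (−1)^{rk(M)−|A|} m(A) ≥ 0. -/
open Finset

section Helpers

variable {α : Type*} [DecidableEq α]

lemma filter_powerset_self (S : Finset α) :
    S.powerset.filter (fun A => S ⊆ A) = {S} := by
  ext A
  simp only [mem_filter, mem_powerset, mem_singleton]
  exact ⟨fun h => Finset.Subset.antisymm h.1 h.2,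
    fun h => by subst h; exact ⟨Finset.Subset.refl _, Finset.Subset.refl _⟩⟩

lemma sum_ipf {e : α} {S R : Finset α} (heS : e ∉ S) (heR : e ∉ R)
    (g : Finset α → ℝ) :
    ∑ A ∈ (insert e S).powerset.filter (fun A => R ⊆ A), g A
      = ∑ A ∈ S.powerset.filter (fun A => R ⊆ A), (g A + g (insert e A)) := by
  have hdisj : Disjoint (S.powerset.filter (fun A => R ⊆ A))
      ((Finset.image (insert e) S.powerset).filter (fun A => R ⊆ A)) := by
    rw [Finset.disjoint_left]
    intro A hA hA'
    have h1 : A ⊆ S := mem_powerset.mp (mem_filter.mp hA).1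
    rw [filter_image, mem_image] at hA'
    obtain ⟨B, _, rfl⟩ := hA'
    exact heS (h1 (mem_insert_self e B))
  rw [powerset_insert, filter_union, sum_union hdisj, filter_image,
    Finset.sum_image (by
      intro x hx y hy hxy
      have hxe : e ∉ x := fun h => heS (mem_powerset.mp (mem_filter.mp hx).1 h)
      have hye : e ∉ y := fun h => heS (mem_powerset.mp (mem_filter.mp hy).1 h)
      have h2 := congrArg (fun s => Finset.erase s e) hxy
      simpa [Finset.erase_insert hxe, Finset.erase_insert hye] using h2)]
  have hfe : Finset.filter (fun a => R ⊆ insert e a) S.powerset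
      = Finset.filter (fun a => R ⊆ a) S.powerset := by
    apply filter_congr
    intro A _
    simp [subset_insert_iff_of_notMem heR]
  rw [hfe, ← sum_add_distrib]

lemma sum_ipf_ins {e : α} {S R : Finset α} (heS : e ∉ S) (heR : e ∉ R)
    (g : Finset α → ℝ) :
    ∑ A ∈ (insert e S).powerset.filter (fun A => insert e R ⊆ A), g A
      = ∑ A ∈ S.powerset.filter (fun A => R ⊆ A), g (insert e A) := by
  apply Finset.sum_bij' (fun A _ => Finset.erase A e) (fun A _ => insert e A)
  · intro A hA
    rw [mem_filter, mem_powerset] at hA ⊢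
    obtain ⟨h1, h2⟩ := hA
    constructor
    · intro x hx
      have hxS := h1 (mem_of_mem_erase hx)
      exact (mem_insert.mp hxS).resolve_left (ne_of_mem_erase hx)
    · intro x hx
      exact mem_erase.mpr ⟨fun h => heR (h ▸ hx), h2 (mem_insert_of_mem hx)⟩
  · intro A hA
    rw [mem_filter, mem_powerset] at hA ⊢
    obtain ⟨h1, h2⟩ := hA
    exact ⟨insert_subset_insert _ h1, insert_subset_insert _ h2⟩
  · intro A hA
    rw [mem_filter] at hA
    exact insert_erase (hA.2 (mem_insert_self _ _))
  · intro A hA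
    rw [mem_filter, mem_powerset] at hA
    exact erase_insert (fun h => heS (hA.1 h))
  · intro A hA
    rw [mem_filter] at hA
    rw [insert_erase (hA.2 (mem_insert_self _ _))]

end Helpers

section Helpers2

variable {α : Type*} [DecidableEq α]

lemma matroid_erase {M : Finset α} {rk : Finset α → ℕ} (e : α) (h : IsMatroidRank M rk) :
    IsMatroidRank (M.erase e) rk := by
  obtain ⟨h0, hmono, hsub, hunit⟩ := h
  refine ⟨h0, ?_, ?_, ?_⟩
  · exact fun A B hAB hBM => hmono A B hAB (hBM.trans (erase_subset _ _))
  · exact fun A B hA hB => hsub A B (hA.trans (erase_subset _ _)) (hB.trans (erase_subset _ _))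
  · exact fun A hA a ha => hunit A (hA.trans (erase_subset _ _)) a (mem_of_mem_erase ha)

lemma pos_erase {M : Finset α} {rk : Finset α → ℕ} {m : Finset α → ℝ} (e : α)
    (h : PositivityAxiom M rk m) : PositivityAxiom (M.erase e) rk m := by
  intro R S F T hmol
  exact h R S F T ⟨hmol.1, hmol.2.1.trans (erase_subset _ _), hmol.2.2⟩

lemma loop_insert {M : Finset α} {rk : Finset α → ℕ} {e : α} (heM : e ∈ M)
    (hrk : IsMatroidRank M rk) (he0 : rk {e} = 0) :
    ∀ X ⊆ M.erase e, rk (insert e X) = rk X := by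
  obtain ⟨h0, hmono, hsub, hunit⟩ := hrk
  intro X hX
  have heX : e ∉ X := fun h => (notMem_erase e M) (hX h)
  have hXM : X ⊆ M := hX.trans (erase_subset _ _)
  have h1 := hsub X {e} hXM (by simpa using heM)
  have h2 : X ∪ {e} = insert e X := by ext x; simp [mem_insert, or_comm]
  have h3 : X ∩ {e} = ∅ := inter_singleton_of_notMem heX
  rw [h2, h3, h0, he0] at h1
  have h4 : rk X ≤ rk (insert e X) :=
    hmono X (insert e X) (subset_insert _ _) (insert_subset heM hXM)
  omega

lemma coloop_insert {M : Finset α} {rk : Finset α → ℕ} {e : α} (heM : e ∈ M)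
    (hrk : IsMatroidRank M rk) (hc : rk M = rk (M.erase e) + 1) :
    ∀ X ⊆ M.erase e, rk (insert e X) = rk X + 1 := by
  obtain ⟨h0, hmono, hsub, hunit⟩ := hrk
  intro X hX
  have heX : e ∉ X := fun h => (notMem_erase e M) (hX h)
  have hXM : X ⊆ M := hX.trans (erase_subset _ _)
  have h1 := hsub (insert e X) (M.erase e) (insert_subset heM hXM) (erase_subset _ _)
  have h2 : insert e X ∪ M.erase e = M := by
    ext x
    simp only [mem_union, mem_insert, mem_erase]
    constructor
    · rintro ((rfl | h) | h)
      · exact heM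
      · exact hXM h
      · exact h.2
    · intro hx
      by_cases hxe : x = e
      · exact Or.inl (Or.inl hxe)
      · exact Or.inr ⟨hxe, hx⟩
  have h3 : insert e X ∩ M.erase e = X := by
    ext x
    simp only [mem_inter, mem_insert, mem_erase]
    constructor
    · rintro ⟨rfl | h, hx⟩
      · exact absurd rfl hx.1
      · exact h
    · intro hx
      exact ⟨Or.inr hx, fun h => heX (h ▸ hx), hXM hx⟩
  rw [h2, h3, hc] at h1
  have h4 := hunit X hXM e heM
  omega

lemma matroid_contract {M : Finset α} {rk : Finset α → ℕ} {e : α} (heM : e ∈ M)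
    (hrk : IsMatroidRank M rk) (he1 : rk {e} = 1) :
    IsMatroidRank (M.erase e) (fun A => rk (insert e A) - 1) := by
  obtain ⟨h0, hmono, hsub, hunit⟩ := hrk
  have hN : M.erase e ⊆ M := erase_subset _ _
  have hins : ∀ X : Finset α, X ⊆ M → insert e X ⊆ M := fun X hX => insert_subset heM hX
  have hge : ∀ X : Finset α, X ⊆ M → 1 ≤ rk (insert e X) := by
    intro X hX
    have := hmono {e} (insert e X) (by simp) (hins X hX)
    omega
  refine ⟨?_, ?_, ?_, ?_⟩
  · show rk (insert e ∅) - 1 = 0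
    have hee : insert e (∅ : Finset α) = {e} := by ext x; simp
    rw [hee, he1]
  · intro A B hAB hBM
    have := hmono (insert e A) (insert e B) (insert_subset_insert _ hAB) (hins B (hBM.trans hN))
    show rk (insert e A) - 1 ≤ rk (insert e B) - 1
    omega
  · intro A B hA hB
    have h1 := hsub (insert e A) (insert e B) (hins A (hA.trans hN)) (hins B (hB.trans hN))
    have hu : insert e A ∪ insert e B = insert e (A ∪ B) := by
      ext x; simp only [mem_union, mem_insert]; tauto
    have hi : insert e A ∩ insert e B = insert e (A ∩ B) := by
      ext x; simp only [mem_inter, mem_insert]; tauto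
    rw [hu, hi] at h1
    have g1 := hge (A ∪ B) (union_subset (hA.trans hN) (hB.trans hN))
    have g2 := hge (A ∩ B) ((inter_subset_left).trans (hA.trans hN))
    have g3 := hge A (hA.trans hN)
    have g4 := hge B (hB.trans hN)
    show rk (insert e (A ∪ B)) - 1 + (rk (insert e (A ∩ B)) - 1)
      ≤ rk (insert e A) - 1 + (rk (insert e B) - 1)
    omega
  · intro A hA a ha
    have haM : a ∈ M := mem_of_mem_erase ha
    have h1 := hunit (insert e A) (hins A (hA.trans hN)) a haM
    have h2 : insert a (insert e A) = insert e (insert a A) := by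
      ext x; simp only [mem_insert]; tauto
    rw [h2] at h1
    have g1 := hge A (hA.trans hN)
    show rk (insert e (insert a A)) - 1 ≤ rk (insert e A) - 1 + 1
    omega

end Helpers2

section Helpers3

variable {α : Type*} [DecidableEq α]

lemma pos_loop {M : Finset α} {rk : Finset α → ℕ} {m : Finset α → ℝ} {e : α} (heM : e ∈ M)
    (hloop : ∀ X ⊆ M.erase e, rk (insert e X) = rk X)
    (hP : PositivityAxiom M rk m) :
    PositivityAxiom (M.erase e) rk (fun A => m A - m (insert e A)) := by
  intro R S F T hmol
  obtain ⟨hRS, hSM, hFT, hU, hrkm⟩ := hmol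
  have heS : e ∉ S := fun h => (notMem_erase e M) (hSM h)
  have heR : e ∉ R := fun h => heS (hRS h)
  have hFS : F ⊆ S \ R := hU ▸ subset_union_left
  have hTS : T ⊆ S \ R := hU ▸ subset_union_right
  have heF : e ∉ F := fun h => heS (mem_sdiff.mp (hFS h)).1
  have heT : e ∉ T := fun h => heS (mem_sdiff.mp (hTS h)).1
  have hmol' : IsMolecule M rk R (insert e S) F (insert e T) := by
    refine ⟨hRS.trans (subset_insert _ _),
      insert_subset heM (hSM.trans (erase_subset _ _)), ?_, ?_, ?_⟩
    · rw [disjoint_insert_right]; exact ⟨heF, hFT⟩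
    · rw [union_insert, hU]
      ext x
      simp only [mem_insert, mem_sdiff]
      constructor
      · rintro (rfl | ⟨h1, h2⟩)
        · exact ⟨Or.inl rfl, heR⟩
        · exact ⟨Or.inr h1, h2⟩
      · rintro ⟨rfl | h1, h2⟩
        · exact Or.inl rfl
        · exact Or.inr ⟨h1, h2⟩
    · intro A hRA hAS
      by_cases heA : e ∈ A
      · have h1 : A.erase e ⊆ S := by
          intro x hx
          exact (mem_insert.mp (hAS (mem_of_mem_erase hx))).resolve_left (ne_of_mem_erase hx)
        have h2 : R ⊆ A.erase e := fun x hx =>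
          mem_erase.mpr ⟨fun hh => heR (hh ▸ hx), hRA hx⟩
        have h3 := hrkm (A.erase e) h2 h1
        have h4 : rk A = rk (A.erase e) := by
          conv_lhs => rw [← insert_erase heA]
          exact hloop _ (h1.trans hSM)
        have h5 : A.erase e ∩ F = A ∩ F := by
          ext x
          simp only [mem_inter, mem_erase]
          constructor
          · rintro ⟨⟨_, h⟩, hF⟩; exact ⟨h, hF⟩
          · rintro ⟨hA', hF⟩; exact ⟨⟨fun hh => heF (hh ▸ hF), hA'⟩, hF⟩
        rw [h4, h3, h5]
      · exact hrkm A hRA (fun x hx =>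
          (mem_insert.mp (hAS hx)).resolve_left (fun hh => heA (hh ▸ hx)))
  have key := hP R (insert e S) F (insert e T) hmol'
  rw [sum_ipf heS heR] at key
  have hsum : ∑ A ∈ S.powerset.filter (fun A => R ⊆ A),
      ((-1:ℝ) ^ ((insert e S).card - A.card) * m A
        + (-1:ℝ) ^ ((insert e S).card - (insert e A).card) * m (insert e A))
      = ∑ A ∈ S.powerset.filter (fun A => R ⊆ A),
        (-1:ℝ) * ((-1:ℝ) ^ (S.card - A.card) * (m A - m (insert e A))) := by
    apply sum_congr rfl
    intro A hA
    have hAS : A ⊆ S := mem_powerset.mp (mem_filter.mp hA).1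
    have heA : e ∉ A := fun h => heS (hAS h)
    have hc : A.card ≤ S.card := card_le_card hAS
    have e1 : (insert e S).card - A.card = (S.card - A.card) + 1 := by
      rw [card_insert_of_notMem heS]; omega
    have e2 : (insert e S).card - (insert e A).card = S.card - A.card := by
      rw [card_insert_of_notMem heS, card_insert_of_notMem heA]; omega
    rw [e1, e2, pow_succ]
    ring
  rw [hsum, card_insert_of_notMem heT, pow_succ, ← Finset.mul_sum] at key
  have hfin : ((-1:ℝ) ^ T.card * -1) * ((-1) *
      ∑ A ∈ S.powerset.filter (fun A => R ⊆ A),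
        (-1:ℝ) ^ (S.card - A.card) * (m A - m (insert e A)))
      = (-1:ℝ) ^ T.card *
      ∑ A ∈ S.powerset.filter (fun A => R ⊆ A),
        (-1:ℝ) ^ (S.card - A.card) * (m A - m (insert e A)) := by ring
  rw [hfin] at key
  exact key

end Helpers3

section Helpers4

variable {α : Type*} [DecidableEq α]

lemma pos_coloop {M : Finset α} {rk : Finset α → ℕ} {m : Finset α → ℝ} {e : α} (heM : e ∈ M)
    (hco : ∀ X ⊆ M.erase e, rk (insert e X) = rk X + 1)
    (hP : PositivityAxiom M rk m) :
    PositivityAxiom (M.erase e) rk (fun A => m (insert e A) - m A) := by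
  intro R S F T hmol
  obtain ⟨hRS, hSM, hFT, hU, hrkm⟩ := hmol
  have heS : e ∉ S := fun h => (notMem_erase e M) (hSM h)
  have heR : e ∉ R := fun h => heS (hRS h)
  have hFS : F ⊆ S \ R := hU ▸ subset_union_left
  have hTS : T ⊆ S \ R := hU ▸ subset_union_right
  have heF : e ∉ F := fun h => heS (mem_sdiff.mp (hFS h)).1
  have heT : e ∉ T := fun h => heS (mem_sdiff.mp (hTS h)).1
  have hmol' : IsMolecule M rk R (insert e S) (insert e F) T := by
    refine ⟨hRS.trans (subset_insert _ _),
      insert_subset heM (hSM.trans (erase_subset _ _)), ?_, ?_, ?_⟩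
    · rw [disjoint_insert_left]; exact ⟨heT, hFT⟩
    · rw [insert_union, hU]
      ext x
      simp only [mem_insert, mem_sdiff]
      constructor
      · rintro (rfl | ⟨h1, h2⟩)
        · exact ⟨Or.inl rfl, heR⟩
        · exact ⟨Or.inr h1, h2⟩
      · rintro ⟨rfl | h1, h2⟩
        · exact Or.inl rfl
        · exact Or.inr ⟨h1, h2⟩
    · intro A hRA hAS
      by_cases heA : e ∈ A
      · have h1 : A.erase e ⊆ S := by
          intro x hx
          exact (mem_insert.mp (hAS (mem_of_mem_erase hx))).resolve_left (ne_of_mem_erase hx)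
        have h2 : R ⊆ A.erase e := fun x hx =>
          mem_erase.mpr ⟨fun hh => heR (hh ▸ hx), hRA hx⟩
        have h3 := hrkm (A.erase e) h2 h1
        have h4 : rk A = rk (A.erase e) + 1 := by
          conv_lhs => rw [← insert_erase heA]
          exact hco _ (h1.trans hSM)
        have h5 : A ∩ insert e F = insert e (A.erase e ∩ F) := by
          ext x
          simp only [mem_inter, mem_insert, mem_erase]
          constructor
          · rintro ⟨hxA, rfl | hxF⟩
            · exact Or.inl rfl
            · exact Or.inr ⟨⟨fun hh => heF (hh ▸ hxF), hxA⟩, hxF⟩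
          · rintro (rfl | ⟨⟨_, hxA⟩, hxF⟩)
            · exact ⟨heA, Or.inl rfl⟩
            · exact ⟨hxA, Or.inr hxF⟩
        have h6 : e ∉ A.erase e ∩ F := fun h => (notMem_erase e A) (mem_inter.mp h).1
        rw [h4, h3, h5, card_insert_of_notMem h6]
        ring
      · have hAS' : A ⊆ S := fun x hx =>
          (mem_insert.mp (hAS hx)).resolve_left (fun hh => heA (hh ▸ hx))
        have h5 : A ∩ insert e F = A ∩ F := by
          ext x
          simp only [mem_inter, mem_insert]
          constructor
          · rintro ⟨hxA, rfl | hxF⟩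
            · exact absurd hxA heA
            · exact ⟨hxA, hxF⟩
          · rintro ⟨hxA, hxF⟩
            exact ⟨hxA, Or.inr hxF⟩
        rw [h5]
        exact hrkm A hRA hAS'
  have key := hP R (insert e S) (insert e F) T hmol'
  rw [sum_ipf heS heR] at key
  have hsum : ∑ A ∈ S.powerset.filter (fun A => R ⊆ A),
      ((-1:ℝ) ^ ((insert e S).card - A.card) * m A
        + (-1:ℝ) ^ ((insert e S).card - (insert e A).card) * m (insert e A))
      = ∑ A ∈ S.powerset.filter (fun A => R ⊆ A),
        (-1:ℝ) ^ (S.card - A.card) * (m (insert e A) - m A) := by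
    apply sum_congr rfl
    intro A hA
    have hAS : A ⊆ S := mem_powerset.mp (mem_filter.mp hA).1
    have heA : e ∉ A := fun h => heS (hAS h)
    have hc : A.card ≤ S.card := card_le_card hAS
    have e1 : (insert e S).card - A.card = (S.card - A.card) + 1 := by
      rw [card_insert_of_notMem heS]; omega
    have e2 : (insert e S).card - (insert e A).card = S.card - A.card := by
      rw [card_insert_of_notMem heS, card_insert_of_notMem heA]; omega
    rw [e1, e2, pow_succ]
    ring
  rw [hsum] at key
  exact key

lemma pos_contract {M : Finset α} {rk : Finset α → ℕ} {m : Finset α → ℝ} {e : α} (heM : e ∈ M)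
    (h1 : ∀ X ⊆ M.erase e, 1 ≤ rk (insert e X))
    (hP : PositivityAxiom M rk m) :
    PositivityAxiom (M.erase e) (fun A => rk (insert e A) - 1) (fun A => m (insert e A)) := by
  intro R S F T hmol
  obtain ⟨hRS, hSM, hFT, hU, hrkm⟩ := hmol
  have heS : e ∉ S := fun h => (notMem_erase e M) (hSM h)
  have heR : e ∉ R := fun h => heS (hRS h)
  have hFS : F ⊆ S \ R := hU ▸ subset_union_left
  have heF : e ∉ F := fun h => heS (mem_sdiff.mp (hFS h)).1
  have hmol' : IsMolecule M rk (insert e R) (insert e S) F T := by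
    refine ⟨insert_subset_insert _ hRS,
      insert_subset heM (hSM.trans (erase_subset _ _)), hFT, ?_, ?_⟩
    · rw [hU]
      ext x
      simp only [mem_sdiff, mem_insert]
      constructor
      · rintro ⟨h2, h3⟩
        exact ⟨Or.inr h2, fun hh => (hh.elim (fun he' => heS (he' ▸ h2)) h3)⟩
      · rintro ⟨rfl | h2, h3⟩
        · exact absurd (Or.inl rfl) h3
        · exact ⟨h2, fun hh => h3 (Or.inr hh)⟩
    · intro A hRA hAS
      have heA : e ∈ A := hRA (mem_insert_self _ _)
      have h2 : R ⊆ A.erase e := fun x hx =>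
        mem_erase.mpr ⟨fun hh => heR (hh ▸ hx), hRA (mem_insert_of_mem hx)⟩
      have h3 : A.erase e ⊆ S := by
        intro x hx
        exact (mem_insert.mp (hAS (mem_of_mem_erase hx))).resolve_left (ne_of_mem_erase hx)
      have h4 := hrkm (A.erase e) h2 h3
      simp only at h4
      have hge1 : 1 ≤ rk (insert e (A.erase e)) := h1 _ (h3.trans hSM)
      have hge2 : 1 ≤ rk (insert e R) := h1 _ (hRS.trans hSM)
      have h6 : insert e (A.erase e) = A := insert_erase heA
      have h7 : A.erase e ∩ F = A ∩ F := by
        ext x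
        simp only [mem_inter, mem_erase]
        constructor
        · rintro ⟨⟨_, h⟩, hF⟩; exact ⟨h, hF⟩
        · rintro ⟨hA', hF⟩; exact ⟨⟨fun hh => heF (hh ▸ hF), hA'⟩, hF⟩
      rw [h6, h7] at h4
      rw [h6] at hge1
      omega
  have key := hP (insert e R) (insert e S) F T hmol'
  rw [sum_ipf_ins heS heR] at key
  have hsum : ∑ A ∈ S.powerset.filter (fun A => R ⊆ A),
      (-1:ℝ) ^ ((insert e S).card - (insert e A).card) * m (insert e A)
      = ∑ A ∈ S.powerset.filter (fun A => R ⊆ A),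
        (-1:ℝ) ^ (S.card - A.card) * m (insert e A) := by
    apply sum_congr rfl
    intro A hA
    have hAS : A ⊆ S := mem_powerset.mp (mem_filter.mp hA).1
    have heA : e ∉ A := fun h => heS (hAS h)
    have e2 : (insert e S).card - (insert e A).card = S.card - A.card := by
      rw [card_insert_of_notMem heS, card_insert_of_notMem heA]; omega
    rw [e2]
  rw [hsum] at key
  exact key

end Helpers4

section Helpers5

variable {α : Type*} [DecidableEq α]

lemma sdiff_single {e : α} {A : Finset α} (heA : e ∉ A) : insert e A \ A = {e} := by
  ext x
  simp only [mem_sdiff, mem_insert, mem_singleton]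
  constructor
  · rintro ⟨rfl | h, hx⟩
    · rfl
    · exact absurd h hx
  · rintro rfl
    exact ⟨Or.inl rfl, heA⟩

lemma interval_two {e : α} {A A' : Finset α} (_heA : e ∉ A) (h1 : A ⊆ A')
    (h2 : A' ⊆ insert e A) : A' = A ∨ A' = insert e A := by
  by_cases heA' : e ∈ A'
  · exact Or.inr (Finset.Subset.antisymm h2 (insert_subset heA' h1))
  · exact Or.inl (Finset.Subset.antisymm
      (fun x hx => (mem_insert.mp (h2 hx)).resolve_left (fun hh => heA' (hh ▸ hx))) h1)

lemma nonneg_loop {M : Finset α} {rk : Finset α → ℕ} {m : Finset α → ℝ} {e : α} (heM : e ∈ M)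
    (hloop : ∀ X ⊆ M.erase e, rk (insert e X) = rk X)
    (hP : PositivityAxiom M rk m) :
    ∀ A ⊆ M.erase e, 0 ≤ m A - m (insert e A) := by
  intro A hA
  have heA : e ∉ A := fun h => (notMem_erase e M) (hA h)
  have hmol : IsMolecule M rk A (insert e A) ∅ {e} := by
    refine ⟨subset_insert _ _, insert_subset heM (hA.trans (erase_subset _ _)), ?_, ?_, ?_⟩
    · exact disjoint_empty_left _
    · rw [empty_union, sdiff_single heA]
    · intro A' h1 h2
      rcases interval_two heA h1 h2 with rfl | rfl
      · simp
      · rw [hloop A hA]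
        simp
  have key := hP A (insert e A) ∅ {e} hmol
  rw [sum_ipf heA heA, filter_powerset_self, sum_singleton] at key
  have e1 : (insert e A).card - A.card = 1 := by
    rw [card_insert_of_notMem heA]; omega
  have e2 : (insert e A).card - (insert e A).card = 0 := Nat.sub_self _
  rw [e1, e2, card_singleton] at key
  norm_num at key
  linarith

lemma nonneg_coloop {M : Finset α} {rk : Finset α → ℕ} {m : Finset α → ℝ} {e : α} (heM : e ∈ M)
    (hco : ∀ X ⊆ M.erase e, rk (insert e X) = rk X + 1)
    (hP : PositivityAxiom M rk m) :
    ∀ A ⊆ M.erase e, 0 ≤ m (insert e A) - m A := by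
  intro A hA
  have heA : e ∉ A := fun h => (notMem_erase e M) (hA h)
  have hmol : IsMolecule M rk A (insert e A) {e} ∅ := by
    refine ⟨subset_insert _ _, insert_subset heM (hA.trans (erase_subset _ _)), ?_, ?_, ?_⟩
    · exact disjoint_empty_right _
    · rw [union_empty, sdiff_single heA]
    · intro A' h1 h2
      rcases interval_two heA h1 h2 with rfl | rfl
      · rw [inter_singleton_of_notMem heA]
        simp
      · rw [hco A hA]
        have : insert e A ∩ {e} = {e} := by
          ext x
          simp only [mem_inter, mem_insert, mem_singleton]
          exact ⟨fun h => h.2, fun h => ⟨Or.inl h, h⟩⟩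
        rw [this, card_singleton]
  have key := hP A (insert e A) {e} ∅ hmol
  rw [sum_ipf heA heA, filter_powerset_self, sum_singleton] at key
  have e1 : (insert e A).card - A.card = 1 := by
    rw [card_insert_of_notMem heA]; omega
  have e2 : (insert e A).card - (insert e A).card = 0 := Nat.sub_self _
  rw [e1, e2, card_empty] at key
  norm_num at key
  linarith

end Helpers5


section MainAux

variable {α : Type*} [DecidableEq α]

lemma main_aux (M : Finset α) :
    ∀ (rk : Finset α → ℕ) (m : Finset α → ℝ), IsMatroidRank M rk →
      (∀ A ⊆ M, 0 ≤ m A) → PositivityAxiom M rk m →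
      0 ≤ ∑ A ∈ M.powerset, (-1:ℝ) ^ ((rk M : ℤ) - (A.card : ℤ)) * m A := by
  induction M using Finset.strongInductionOn with
  | _ M ih =>
  intro rk m hrk hm hP
  rcases M.eq_empty_or_nonempty with rfl | ⟨e, heM⟩
  · rw [powerset_empty, sum_singleton, hrk.1]
    simpa using hm ∅ (Finset.Subset.refl _)
  · have heN : e ∉ M.erase e := notMem_erase e M
    have hNM : M.erase e ⊂ M := erase_ssubset heM
    have hMN : M = insert e (M.erase e) := (insert_erase heM).symm
    have hNsub : M.erase e ⊆ M := erase_subset e M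
    obtain ⟨h0, hmono, hsub, hunit⟩ := hrk
    have hrk' : IsMatroidRank M rk := ⟨h0, hmono, hsub, hunit⟩
    have hNrk : IsMatroidRank (M.erase e) rk := matroid_erase e hrk'
    have hre : rk {e} ≤ 1 := by
      have h1 := hunit ∅ (empty_subset M) e heM
      have h2 : insert e (∅ : Finset α) = {e} := by ext x; simp
      rw [h2, h0] at h1
      omega
    have hups : rk M ≤ rk (M.erase e) + 1 := by
      have h1 := hunit (M.erase e) hNsub e heM
      rw [← hMN] at h1
      exact h1
    have hmn : rk (M.erase e) ≤ rk M := hmono (M.erase e) M hNsub (Finset.Subset.refl M)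
    rw [hMN, sum_powerset_insert heN, ← hMN]
    by_cases hcol : rk M = rk (M.erase e) + 1
    · -- coloop case
      have hco := coloop_insert heM hrk' hcol
      have htrans : (∑ A ∈ (M.erase e).powerset, (-1:ℝ) ^ ((rk M : ℤ) - (A.card : ℤ)) * m A)
          + (∑ A ∈ (M.erase e).powerset,
              (-1:ℝ) ^ ((rk M : ℤ) - (((insert e A).card : ℕ) : ℤ)) * m (insert e A))
          = ∑ A ∈ (M.erase e).powerset,
              (-1:ℝ) ^ ((rk (M.erase e) : ℤ) - (A.card : ℤ)) * (m (insert e A) - m A) := by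
        rw [← sum_add_distrib]
        apply sum_congr rfl
        intro A hA
        have hAN : A ⊆ M.erase e := mem_powerset.mp hA
        have heA : e ∉ A := fun h => heN (hAN h)
        have e1 : ((rk M : ℤ) - (A.card : ℤ)) = ((rk (M.erase e) : ℤ) - (A.card : ℤ)) + 1 := by
          rw [hcol]; push_cast; ring
        have e2 : ((rk M : ℤ) - (((insert e A).card : ℕ) : ℤ))
            = (rk (M.erase e) : ℤ) - (A.card : ℤ) := by
          rw [hcol, card_insert_of_notMem heA]; push_cast; ring
        rw [e1, e2, zpow_add_one₀ (by norm_num : (-1:ℝ) ≠ 0)]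
        ring
      rw [htrans]
      exact ih (M.erase e) hNM rk (fun A => m (insert e A) - m A) hNrk
        (nonneg_coloop heM hco hP) (pos_coloop heM hco hP)
    · by_cases hl : rk {e} = 0
      · -- loop case
        have hlo := loop_insert heM hrk' hl
        have hMNr : rk M = rk (M.erase e) := by
          conv_lhs => rw [hMN]
          exact hlo (M.erase e) (Finset.Subset.refl _)
        have htrans : (∑ A ∈ (M.erase e).powerset, (-1:ℝ) ^ ((rk M : ℤ) - (A.card : ℤ)) * m A)
            + (∑ A ∈ (M.erase e).powerset,
                (-1:ℝ) ^ ((rk M : ℤ) - (((insert e A).card : ℕ) : ℤ)) * m (insert e A))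
            = ∑ A ∈ (M.erase e).powerset,
                (-1:ℝ) ^ ((rk (M.erase e) : ℤ) - (A.card : ℤ)) * (m A - m (insert e A)) := by
          rw [← sum_add_distrib]
          apply sum_congr rfl
          intro A hA
          have hAN : A ⊆ M.erase e := mem_powerset.mp hA
          have heA : e ∉ A := fun h => heN (hAN h)
          have e1 : ((rk M : ℤ) - (A.card : ℤ)) = (rk (M.erase e) : ℤ) - (A.card : ℤ) := by
            rw [hMNr]
          have e2 : ((rk M : ℤ) - (((insert e A).card : ℕ) : ℤ))
              = ((rk (M.erase e) : ℤ) - (A.card : ℤ)) - 1 := by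
            rw [hMNr, card_insert_of_notMem heA]; push_cast; ring
          rw [e1, e2, zpow_sub_one₀ (by norm_num : (-1:ℝ) ≠ 0)]
          have hinv : ((-1:ℝ))⁻¹ = -1 := by norm_num
          rw [hinv]
          ring
        rw [htrans]
        exact ih (M.erase e) hNM rk (fun A => m A - m (insert e A)) hNrk
          (nonneg_loop heM hlo hP) (pos_loop heM hlo hP)
      · -- ordinary case: rk {e} = 1, rk M = rk (M.erase e)
        have hre1 : rk {e} = 1 := by omega
        have hMNr : rk M = rk (M.erase e) := by omega
        have hgin : ∀ X ⊆ M.erase e, 1 ≤ rk (insert e X) := by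
          intro X hX
          have := hmono {e} (insert e X) (by simp)
            (insert_subset heM (hX.trans hNsub))
          omega
        have hrkM1 : 1 ≤ rk M := by
          have := hmono {e} M (by simpa using heM) (Finset.Subset.refl M)
          omega
        have hrkN' : rk (insert e (M.erase e)) - 1 = rk M - 1 := by rw [← hMN]
        have h1 : 0 ≤ ∑ A ∈ (M.erase e).powerset,
            (-1:ℝ) ^ ((rk M : ℤ) - (A.card : ℤ)) * m A := by
          rw [show (rk M : ℤ) = (rk (M.erase e) : ℤ) by exact_mod_cast hMNr]
          exact ih (M.erase e) hNM rk m hNrk (fun A hA => hm A (hA.trans hNsub))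
            (pos_erase e hP)
        have h2 : 0 ≤ ∑ A ∈ (M.erase e).powerset,
            (-1:ℝ) ^ ((rk M : ℤ) - (((insert e A).card : ℕ) : ℤ)) * m (insert e A) := by
          have hieq : ∀ A ∈ (M.erase e).powerset,
              (-1:ℝ) ^ ((rk M : ℤ) - (((insert e A).card : ℕ) : ℤ)) * m (insert e A)
              = (-1:ℝ) ^ (((rk (insert e (M.erase e)) - 1 : ℕ) : ℤ) - (A.card : ℤ))
                  * m (insert e A) := by
            intro A hA
            have hAN : A ⊆ M.erase e := mem_powerset.mp hA
            have heA : e ∉ A := fun h => heN (hAN h)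
            have e2 : ((rk M : ℤ) - (((insert e A).card : ℕ) : ℤ))
                = (((rk (insert e (M.erase e)) - 1 : ℕ) : ℤ) - (A.card : ℤ)) := by
              rw [hrkN', card_insert_of_notMem heA]
              have : ((rk M - 1 : ℕ) : ℤ) = (rk M : ℤ) - 1 := by
                omega
              rw [this]
              push_cast
              ring
            rw [e2]
          rw [sum_congr rfl hieq]
          exact ih (M.erase e) hNM (fun A => rk (insert e A) - 1) (fun A => m (insert e A))
            (matroid_contract heM hrk' hre1)
            (fun A hA => hm (insert e A) (insert_subset heM (hA.trans hNsub)))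
            (pos_contract heM hgin hP)
        linarith

end MainAux


/-- For a pseudo-arithmetic matroid `(M, rk, m)`,
`𝔐_M(0,0) = Σ_{A⊆M} (−1)^{rk(M)−|A|} m(A) ≥ 0`. -/
theorem arithmetic_tutte_at_zero_zero_nonneg {α : Type*} [DecidableEq α]
    (M : Finset α) (rk : Finset α → ℕ) (m : Finset α → ℝ)
    (hrk : IsMatroidRank M rk) (hm : ∀ A : Finset α, 0 ≤ m A)
    (hP : PositivityAxiom M rk m) :
    0 ≤ ∑ A ∈ M.powerset, (-1 : ℝ) ^ ((rk M : ℤ) - (A.card : ℤ)) * m A :=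
  main_aux M rk m hrk (fun A _ => hm A) hP
end

section
/- Let (M, rk) be a matroid and let m₁, m₂ : 2^M → ℝ be two functions. If both m₁ and m₂ satisfy the positivity axiom (P), then their pointwise product m₁m₂, defined by (m₁m₂)(A) = m₁(A)·m₂(A), also satisfies the positivity axiom (P). -/
open Finset

/-- The iterated finite difference of `h` over the cube `[R, R ∪ E]`. -/
noncomputable def molDiff {α : Type*} [DecidableEq α] (h : Finset α → ℝ) (R E : Finset α) : ℝ :=
  ∑ C ∈ E.powerset, (-1 : ℝ) ^ (E.card - C.card) * h (R ∪ C)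

lemma molDiff_insert {α : Type*} [DecidableEq α] (h : Finset α → ℝ) (R E : Finset α) (e : α)
    (he : e ∉ E) :
    molDiff h R (insert e E) = molDiff h (insert e R) E - molDiff h R E := by
  unfold molDiff
  rw [Finset.sum_powerset_insert he]
  have h1 : ∀ t ∈ E.powerset,
      (-1 : ℝ) ^ ((insert e E).card - t.card) * h (R ∪ t)
        = -((-1 : ℝ) ^ (E.card - t.card) * h (R ∪ t)) := by
    intro t ht
    rw [Finset.mem_powerset] at ht
    rw [Finset.card_insert_of_notMem he, Nat.succ_sub (Finset.card_le_card ht), pow_succ]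
    ring
  have h2 : ∀ t ∈ E.powerset,
      (-1 : ℝ) ^ ((insert e E).card - (insert e t).card) * h (R ∪ insert e t)
        = (-1 : ℝ) ^ (E.card - t.card) * h (insert e R ∪ t) := by
    intro t ht
    rw [Finset.mem_powerset] at ht
    have het : e ∉ t := fun h' => he (ht h')
    rw [Finset.card_insert_of_notMem he, Finset.card_insert_of_notMem het,
      Nat.succ_sub_succ, Finset.union_insert, Finset.insert_union]
  rw [Finset.sum_congr rfl h1, Finset.sum_congr rfl h2]
  rw [Finset.sum_neg_distrib]
  ring

/-- Discrete Leibniz rule for iterated finite differences. -/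
lemma molDiff_leibniz {α : Type*} [DecidableEq α] (f g : Finset α → ℝ) (E : Finset α) :
    ∀ R : Finset α, molDiff (fun X => f X * g X) R E
      = ∑ B ∈ E.powerset, molDiff f R B * molDiff g (R ∪ B) (E \ B) := by
  induction E using Finset.induction_on with
  | empty => intro R; simp [molDiff]
  | @insert e E he ih =>
      intro R
      rw [molDiff_insert _ _ _ _ he, ih, ih, Finset.sum_powerset_insert he,
        ← Finset.sum_sub_distrib, ← Finset.sum_add_distrib]
      refine Finset.sum_congr rfl ?_
      intro B hB
      rw [Finset.mem_powerset] at hB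
      have heB : e ∉ B := fun h' => he (hB h')
      have heEB : e ∉ E \ B := fun h' => he (Finset.mem_sdiff.mp h').1
      have hd1 : insert e E \ B = insert e (E \ B) :=
        Finset.insert_sdiff_of_notMem _ heB
      have hd2 : insert e E \ insert e B = E \ B := by
        ext x
        simp only [Finset.mem_sdiff, Finset.mem_insert, not_or]
        constructor
        · rintro ⟨h1 | h1, h2, h3⟩
          · exact absurd h1 h2
          · exact ⟨h1, h3⟩
        · rintro ⟨h1, h2⟩
          exact ⟨Or.inr h1, fun hx => he (hx ▸ h1), h2⟩
      rw [hd1, hd2, molDiff_insert _ _ _ _ heEB, molDiff_insert _ _ _ _ heB,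
        Finset.union_insert, Finset.insert_union]
      ring

/-- The molecule sum in the positivity axiom equals a finite difference. -/
lemma sum_interval_eq_molDiff {α : Type*} [DecidableEq α] (m : Finset α → ℝ)
    (R S : Finset α) (hRS : R ⊆ S) :
    ∑ A ∈ S.powerset.filter (fun A => R ⊆ A), (-1 : ℝ) ^ (S.card - A.card) * m A
      = molDiff m R (S \ R) := by
  unfold molDiff
  refine Finset.sum_bij' (fun A _ => A \ R) (fun C _ => R ∪ C) ?_ ?_ ?_ ?_ ?_
  · intro A hA
    rw [Finset.mem_filter, Finset.mem_powerset] at hA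
    exact Finset.mem_powerset.mpr (Finset.sdiff_subset_sdiff hA.1 Finset.Subset.rfl)
  · intro C hC
    rw [Finset.mem_powerset] at hC
    rw [Finset.mem_filter, Finset.mem_powerset]
    exact ⟨Finset.union_subset hRS (hC.trans Finset.sdiff_subset), Finset.subset_union_left⟩
  · intro A hA
    rw [Finset.mem_filter, Finset.mem_powerset] at hA
    exact Finset.union_sdiff_of_subset hA.2
  · intro C hC
    rw [Finset.mem_powerset] at hC
    have hd : Disjoint R C := Finset.disjoint_sdiff.mono_right hC
    exact Finset.union_sdiff_cancel_left hd
  · intro A hA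
    rw [Finset.mem_filter, Finset.mem_powerset] at hA
    have h1 : (S \ R).card = S.card - R.card := Finset.card_sdiff_of_subset hRS
    have h2 : (A \ R).card = A.card - R.card := Finset.card_sdiff_of_subset hA.2
    have h3 : R.card ≤ A.card := Finset.card_le_card hA.2
    have h4 : A.card ≤ S.card := Finset.card_le_card hA.1
    have hexp : (S \ R).card - (A \ R).card = S.card - A.card := by omega
    rw [hexp, Finset.union_sdiff_of_subset hA.2]

/-- **Positivity of products of multiplicity functions**: if `m₁` and `m₂` both satisfy the
positivity axiom (P) for the matroid `(M, rk)`, then so does their pointwise product. -/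
theorem positivity_axiom_product {α : Type*} [DecidableEq α]
    (M : Finset α) (rk : Finset α → ℕ) (m₁ m₂ : Finset α → ℝ)
    (hrk : IsMatroidRank M rk)
    (h₁ : PositivityAxiom M rk m₁) (h₂ : PositivityAxiom M rk m₂) :
    PositivityAxiom M rk (fun A => m₁ A * m₂ A) := by
  intro R S F T hmol
  obtain ⟨hRS, hSM, hFT, hFTeq, hrank⟩ := hmol
  have hFsub : F ⊆ S \ R := hFTeq ▸ Finset.subset_union_left
  have hTsub : T ⊆ S \ R := hFTeq ▸ Finset.subset_union_right
  rw [sum_interval_eq_molDiff _ _ _ hRS, molDiff_leibniz, Finset.mul_sum]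
  apply Finset.sum_nonneg
  intro B hB
  rw [Finset.mem_powerset] at hB
  have hBS : B ⊆ S := hB.trans Finset.sdiff_subset
  have hRBdisj : Disjoint R B := Finset.disjoint_sdiff.mono_right hB
  have hBR : (R ∪ B) \ R = B := Finset.union_sdiff_cancel_left hRBdisj
  have hRBS : R ∪ B ⊆ S := Finset.union_subset hRS hBS
  -- the two sub-molecules
  have hm1 : IsMolecule M rk R (R ∪ B) (B ∩ F) (B ∩ T) := by
    refine ⟨Finset.subset_union_left, hRBS.trans hSM,
      hFT.mono Finset.inter_subset_right Finset.inter_subset_right, ?_, ?_⟩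
    · rw [← Finset.inter_union_distrib_left, hFTeq, hBR,
        Finset.inter_eq_left.mpr hB]
    · intro A hRA hAB
      have hAS : A ⊆ S := hAB.trans hRBS
      have hAF : A ∩ (B ∩ F) = A ∩ F := by
        ext x
        simp only [Finset.mem_inter]
        constructor
        · rintro ⟨h1, _, h3⟩; exact ⟨h1, h3⟩
        · rintro ⟨h1, h2⟩
          refine ⟨h1, ?_, h2⟩
          rcases Finset.mem_union.mp (hAB h1) with hR | hBx
          · exact absurd (Finset.mem_sdiff.mp (hFsub h2)).2 (fun h => h hR)
          · exact hBx
      rw [hAF]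
      exact hrank A hRA hAS
  have hm2 : IsMolecule M rk (R ∪ B) S (F \ B) (T \ B) := by
    refine ⟨hRBS, hSM, hFT.mono Finset.sdiff_subset Finset.sdiff_subset, ?_, ?_⟩
    · rw [← Finset.union_sdiff_distrib, hFTeq]
      ext x
      simp only [Finset.mem_sdiff, Finset.mem_union, not_or]
      tauto
    · intro A hRBA hAS
      have hRA : R ⊆ A := Finset.subset_union_left.trans hRBA
      have hBA : B ⊆ A := Finset.subset_union_right.trans hRBA
      have hRBF : (R ∪ B) ∩ F = B ∩ F := by
        ext x
        simp only [Finset.mem_inter, Finset.mem_union]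
        constructor
        · rintro ⟨hR | hBx, hF⟩
          · exact absurd hR (Finset.mem_sdiff.mp (hFsub hF)).2
          · exact ⟨hBx, hF⟩
        · rintro ⟨hBx, hF⟩; exact ⟨Or.inr hBx, hF⟩
      have e1 : rk A = rk R + (A ∩ F).card := hrank A hRA hAS
      have e2 : rk (R ∪ B) = rk R + (B ∩ F).card := by
        rw [hrank (R ∪ B) Finset.subset_union_left hRBS, hRBF]
      have hsub : B ∩ F ⊆ A ∩ F := Finset.inter_subset_inter hBA Finset.Subset.rfl
      have hAFB : A ∩ (F \ B) = (A ∩ F) \ (B ∩ F) := by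
        ext x
        simp only [Finset.mem_inter, Finset.mem_sdiff, not_and]
        constructor
        · rintro ⟨h1, h2, h3⟩; exact ⟨⟨h1, h2⟩, fun hb => absurd hb h3⟩
        · rintro ⟨⟨h1, h2⟩, h3⟩; exact ⟨h1, h2, fun hb => (h3 hb) h2⟩
      have hcard : (A ∩ (F \ B)).card = (A ∩ F).card - (B ∩ F).card := by
        rw [hAFB, Finset.card_sdiff_of_subset hsub]
      have hle : (B ∩ F).card ≤ (A ∩ F).card := Finset.card_le_card hsub
      omega
  have p1 := h₁ R (R ∪ B) (B ∩ F) (B ∩ T) hm1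
  have p2 := h₂ (R ∪ B) S (F \ B) (T \ B) hm2
  rw [sum_interval_eq_molDiff _ _ _ Finset.subset_union_left, hBR] at p1
  rw [sum_interval_eq_molDiff _ _ _ hRBS] at p2
  have hSRB : S \ (R ∪ B) = (S \ R) \ B := by
    ext x
    simp only [Finset.mem_sdiff, Finset.mem_union, not_or]
    tauto
  rw [hSRB] at p2
  have hsign : ((-1 : ℝ)) ^ T.card = (-1 : ℝ) ^ (B ∩ T).card * (-1 : ℝ) ^ (T \ B).card := by
    rw [← pow_add]
    congr 1
    rw [Finset.inter_comm]
    exact (Finset.card_inter_add_card_sdiff T B).symm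
  have := mul_nonneg p1 p2
  calc (0 : ℝ) ≤ ((-1 : ℝ) ^ (B ∩ T).card * molDiff m₁ R B)
      * ((-1 : ℝ) ^ (T \ B).card * molDiff m₂ (R ∪ B) ((S \ R) \ B)) := this
    _ = (-1 : ℝ) ^ T.card * (molDiff m₁ R B * molDiff m₂ (R ∪ B) ((S \ R) \ B)) := by
        rw [hsign]; ring
end

section
/- Let K be a commutative ring with 1, let x, y be invertible elements of K, let M be a finite set, and let rk : 2^M → ℤ be any function with rk(∅) = 0. Then Σ_{A ⊆ M} x^{rk(A)}·y^{|A|−rk(A)}·(−x)^{rk(M)−rk(A)}·(−y)^{|M∖A|−(rk(M)−rk(A))} equals 1 if M = ∅ and 0 otherwise (all powers are taken with integer exponents, which is possible since x, y, −x, −y are invertible). Equivalently, in the convolution algebra of invariants of ranked sets, ζ(x,y)^{−1} = ζ(−x,−y), where ζ(x,y)(M) := x^{rk(M)} y^{|M|−rk(M)}. -/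
open Finset

private lemma key_term {K : Type*} [CommRing K] (x y : Kˣ) (a b c d : ℤ) :
    x ^ a * y ^ b * (-x) ^ c * (-y) ^ d =
      (-1 : Kˣ) ^ (c + d) * (x ^ (a + c) * y ^ (b + d)) := by
  rw [neg_eq_neg_one_mul x, neg_eq_neg_one_mul y, mul_zpow, mul_zpow,
    zpow_add, zpow_add, zpow_add]
  simp only [mul_assoc, mul_comm, mul_left_comm]

/-- **`ζ(x,y)⁻¹ = ζ(−x,−y)` in the convolution algebra**: for invertible `x, y` in a
commutative ring `K`, a finite set `M` and any `rk : 2^M → ℤ` with `rk ∅ = 0`,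
`Σ_{A ⊆ M} x^{rk(A)} y^{|A|−rk(A)} (−x)^{rk(M)−rk(A)} (−y)^{|M∖A|−(rk(M)−rk(A))}`
equals `1` if `M = ∅` and `0` otherwise; i.e. `(ζ(x,y) ∘ ζ(−x,−y))(M) = δ(M)`. -/
theorem zeta_inv_eq_zeta_neg {K : Type*} [CommRing K] {α : Type*} [DecidableEq α]
    (x y : Kˣ) (M : Finset α) (rk : Finset α → ℤ) (hrk : rk ∅ = 0) :
    (∑ A ∈ M.powerset,
      ((x ^ rk A * y ^ ((A.card : ℤ) - rk A) * (-x) ^ (rk M - rk A) *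
          (-y) ^ (((M \ A).card : ℤ) - (rk M - rk A)) : Kˣ) : K)) =
      if M = ∅ then 1 else 0 := by
  have step : ∀ A ∈ M.powerset,
      ((x ^ rk A * y ^ ((A.card : ℤ) - rk A) * (-x) ^ (rk M - rk A) *
          (-y) ^ (((M \ A).card : ℤ) - (rk M - rk A)) : Kˣ) : K) =
      (-1 : K) ^ (M \ A).card *
        ((x ^ rk M * y ^ ((M.card : ℤ) - rk M) : Kˣ) : K) := by
    intro A hA
    have hsub : A ⊆ M := mem_powerset.mp hA
    have hcards : (A.card : ℤ) + ((M \ A).card : ℤ) = (M.card : ℤ) := by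
      have h : A.card + (M \ A).card = M.card := by
        have := Finset.card_sdiff_add_card_eq_card hsub; omega
      exact_mod_cast h
    rw [key_term]
    have he1 : rk M - rk A + (((M \ A).card : ℤ) - (rk M - rk A)) = ((M \ A).card : ℤ) := by
      ring
    have he2 : rk A + (rk M - rk A) = rk M := by ring
    have he3 : (A.card : ℤ) - rk A + (((M \ A).card : ℤ) - (rk M - rk A)) =
        (M.card : ℤ) - rk M := by
      rw [← hcards]; ring
    rw [he1, he2, he3, zpow_natCast]
    push_cast
    ring
  rw [Finset.sum_congr rfl step, ← Finset.sum_mul]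
  have hsum : (∑ A ∈ M.powerset, (-1 : K) ^ (M \ A).card)
      = if M = ∅ then 1 else 0 := by
    have hbij : (∑ A ∈ M.powerset, (-1 : K) ^ (M \ A).card)
        = ∑ A ∈ M.powerset, (-1 : K) ^ A.card := by
      refine Finset.sum_nbij' (fun A => M \ A) (fun A => M \ A) ?_ ?_ ?_ ?_ ?_
      · intro A hA; exact mem_powerset.mpr (sdiff_subset)
      · intro A hA; exact mem_powerset.mpr (sdiff_subset)
      · intro A hA; exact Finset.sdiff_sdiff_eq_self (mem_powerset.mp hA)
      · intro A hA; exact Finset.sdiff_sdiff_eq_self (mem_powerset.mp hA)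
      · intro A hA; rfl
    rw [hbij]
    have h : (∑ A ∈ M.powerset, (-1 : ℤ) ^ A.card) = if M = ∅ then 1 else 0 :=
      Finset.sum_powerset_neg_one_pow_card
    calc (∑ A ∈ M.powerset, (-1 : K) ^ A.card)
        = ((∑ A ∈ M.powerset, (-1 : ℤ) ^ A.card : ℤ) : K) := by push_cast; rfl
      _ = if M = ∅ then 1 else 0 := by rw [h]; split <;> simp
  rw [hsum]
  by_cases h : M = ∅
  · simp [h, hrk]
  · simp [h]
end

section
/- There is no finitely generated abelian group G together with a list x'_1, x'_2, x'_3, x'_4 of elements of G such that for every A ⊆ {1,2,3,4}: the torsion-free rank of the subgroup ⟨x'_i : i ∈ A⟩ equals min(|A|, 2), and the order of the torsion subgroup of G/⟨x'_i : i ∈ A⟩ equals 4 if A = {3,4} and equals 1 otherwise. (In other words, the arithmetic matroid (E, rk, m²), where (E, rk, m) is the arithmetic matroid represented by the list X = ((1,0), (0,1), (1,1), (1,−1)) of vectors in ℤ², is not representable, even though (E, rk, m) is: for this X the underlying matroid is the uniform matroid U_{2,4}, m(A) = 2 for A = {3,4} and m(A) = 1 for every other A ⊆ {1,2,3,4}.)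 -/
open Finset

open Finset

section AuxNonRep
variable {G : Type*} [AddCommGroup G]

private lemma aux_mem_closure_iff {s : Set G} {g : G} :
    g ∈ AddSubgroup.closure s ↔ g ∈ Submodule.span ℤ s := by
  rw [← Submodule.span_int_eq_addSubgroupClosure]
  rfl

private lemma aux_finrank_closure (s : Set G) :
    Module.finrank ℤ (AddSubgroup.closure s) = Module.finrank ℤ (Submodule.span ℤ s) := by
  rw [← Submodule.span_int_eq_addSubgroupClosure]
  rfl

private lemma aux_sat (H : AddSubgroup G)
    (h1 : Nat.card (AddCommGroup.torsion (G ⧸ H)) = 1)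
    (g : G) (n : ℤ) (hn : n ≠ 0) (hg : n • g ∈ H) : g ∈ H := by
  have hmk : ((n • g : G) : G ⧸ H) = 0 := (QuotientAddGroup.eq_zero_iff _).mpr hg
  have h1' : n • (g : G ⧸ H) = 0 := by rw [← hmk]; rfl
  have h2 : (n.natAbs : ℤ) • (g : G ⧸ H) = 0 := by
    rcases Int.natAbs_eq n with h | h
    · rw [← h]; exact h1'
    · have hneg : (n.natAbs : ℤ) = -n := by omega
      rw [hneg, neg_smul, h1', neg_zero]
  have hfin : IsOfFinAddOrder ((g : G ⧸ H)) := by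
    rw [isOfFinAddOrder_iff_nsmul_eq_zero]
    refine ⟨n.natAbs, Int.natAbs_pos.mpr hn, ?_⟩
    rw [← natCast_zsmul]; exact h2
  have hmem : ((g : G ⧸ H)) ∈ AddCommGroup.torsion (G ⧸ H) := hfin
  obtain ⟨x, hx⟩ := Nat.card_eq_one_iff_exists.mp h1
  have e1 : (⟨(g : G ⧸ H), hmem⟩ : AddCommGroup.torsion (G ⧸ H)) = x := hx _
  have e2 : (⟨(0 : G ⧸ H), AddSubgroup.zero_mem _⟩ : AddCommGroup.torsion (G ⧸ H)) = x := hx _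
  have h0 : ((g : G ⧸ H)) = (0 : G ⧸ H) := congrArg Subtype.val (e1.trans e2.symm)
  exact (QuotientAddGroup.eq_zero_iff _).mp h0

private lemma aux_sat' (s : Set G)
    (h1 : Nat.card (AddCommGroup.torsion (G ⧸ AddSubgroup.closure s)) = 1)
    (g : G) (n : ℤ) (hn : n ≠ 0) (hg : n • g ∈ Submodule.span ℤ s) :
    g ∈ Submodule.span ℤ s :=
  aux_mem_closure_iff.mp (aux_sat _ h1 g n hn (aux_mem_closure_iff.mpr hg))

private lemma aux_dep (TF : ∀ (n : ℤ) (g : G), n ≠ 0 → n • g = 0 → g = 0)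
    (u v : G) (a b : ℤ) (ha : a ≠ 0) (hrel : a • u + b • v = 0) :
    Module.finrank ℤ (Submodule.span ℤ ({u, v} : Set G)) ≤ 1 := by
  have hbv : a • u = -(b • v) := eq_neg_of_add_eq_zero_left hrel
  have hmap : ∀ w : Submodule.span ℤ ({u, v} : Set G),
      a • (w : G) ∈ Submodule.span ℤ ({v} : Set G) := by
    rintro ⟨w, hw⟩
    obtain ⟨m, k, hmk⟩ := Submodule.mem_span_pair.mp hw
    have hcalc : a • w = (a * k - m * b) • v := by
      rw [← hmk, smul_add, smul_smul, smul_smul, mul_comm a m, ← smul_smul, hbv,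
        smul_neg, smul_smul, sub_smul, neg_add_eq_sub]
    simp only
    rw [hcalc]
    exact Submodule.mem_span_singleton.mpr ⟨_, rfl⟩
  let f : Submodule.span ℤ ({u, v} : Set G) →ₗ[ℤ] Submodule.span ℤ ({v} : Set G) :=
    { toFun := fun w => ⟨a • (w : G), hmap w⟩
      map_add' := by intro w1 w2; ext; simp [smul_add]
      map_smul' := by intro c w; ext; simp [smul_comm a c] }
  have hinj : Function.Injective f := by
    intro w1 w2 h
    have h' : a • (w1 : G) = a • (w2 : G) := by
      have := Subtype.ext_iff.mp h
      simpa [f] using this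
    have hz : a • ((w1 : G) - (w2 : G)) = 0 := by rw [smul_sub, h', sub_self]
    exact Subtype.ext (sub_eq_zero.mp (TF a _ ha hz))
  have hr : Module.rank ℤ (Submodule.span ℤ ({u, v} : Set G)) ≤ 1 := by
    refine le_trans (LinearMap.rank_le_of_injective f hinj) ?_
    simpa using rank_span_le (R := ℤ) ({v} : Set G)
  exact Module.finrank_le_of_rank_le (by exact_mod_cast hr)

private lemma aux_indep (TF : ∀ (n : ℤ) (g : G), n ≠ 0 → n • g = 0 → g = 0)
    (u v : G) (h2 : Module.finrank ℤ (Submodule.span ℤ ({u, v} : Set G)) = 2) :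
    ∀ s t : ℤ, s • u + t • v = 0 → s = 0 ∧ t = 0 := by
  intro s t hst
  by_contra hcon
  rcases not_and_or.mp hcon with hs | ht
  · have := aux_dep TF u v s t hs hst
    omega
  · have hsym : t • v + s • u = 0 := by rw [add_comm]; exact hst
    have := aux_dep TF v u t s ht hsym
    rw [Set.pair_comm v u] at this
    omega

private lemma aux_triple (u v w : G)
    (h2 : Module.finrank ℤ (Submodule.span ℤ ({u, v, w} : Set G)) = 2) :
    ∃ a b c : ℤ, a • u + b • v + c • w = 0 ∧ (a ≠ 0 ∨ b ≠ 0 ∨ c ≠ 0) := by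
  by_contra hcon
  push_neg at hcon
  have hindep : LinearIndependent ℤ ![u, v, w] := by
    rw [Fintype.linearIndependent_iff]
    intro g hg
    have := hcon (g 0) (g 1) (g 2) (by
      have h' : ∑ i, g i • ![u, v, w] i = g 0 • u + g 1 • v + g 2 • w := by
        simp [Fin.sum_univ_three]
      rw [← h']; exact hg)
    intro i; fin_cases i <;> simp [this.1, this.2.1, this.2.2]
  set N := Submodule.span ℤ ({u, v, w} : Set G) with hN
  have hmemu : u ∈ N := Submodule.subset_span (by simp)
  have hmemv : v ∈ N := Submodule.subset_span (by simp)
  have hmemw : w ∈ N := Submodule.subset_span (by simp)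
  have hindep' : LinearIndependent ℤ (![⟨u, hmemu⟩, ⟨v, hmemv⟩, ⟨w, hmemw⟩] : Fin 3 → N) := by
    apply LinearIndependent.of_comp N.subtype
    convert hindep using 1
    ext i
    fin_cases i <;> rfl
  haveI hfin : Module.Finite ℤ N := Module.Finite.span_of_finite ℤ (Set.toFinite _)
  have h3 : 3 ≤ Module.finrank ℤ N := by simpa using hindep'.fintype_card_le_finrank
  omega

end AuxNonRep

/-- **Non-representability of the squared arithmetic matroid of
`X = ((1,0), (0,1), (1,1), (1,−1)) ⊆ ℤ²`.** There is no finitely generated abelian group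
`G` with a list `x'_1, …, x'_4` of elements such that for every `A ⊆ {1,2,3,4}` the
torsion-free rank of `⟨x'_i : i ∈ A⟩` is `min(|A|, 2)` and the order of the torsion
subgroup of `G/⟨x'_i : i ∈ A⟩` is `4` for `A = {3,4}` and `1` otherwise.
(Here the elements of `Fin 4` indexed `2, 3` correspond to the 1-based indices `3, 4`.) -/
theorem squared_arithmetic_matroid_not_representable
    (G : Type*) [AddCommGroup G] [AddGroup.FG G] (x' : Fin 4 → G) :
    ¬ ∀ A : Finset (Fin 4),
        Module.finrank ℤ (AddSubgroup.closure (x' '' (A : Set (Fin 4)))) =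
            min A.card 2 ∧
        Nat.card (AddCommGroup.torsion (G ⧸ AddSubgroup.closure (x' '' (A : Set (Fin 4))))) =
            (if A = {2, 3} then 4 else 1) := by
  intro h
  -- torsion-freeness of G, from A = ∅
  have hTF : ∀ (n : ℤ) (g : G), n ≠ 0 → n • g = 0 → g = 0 := by
    intro n g hn hng
    have h0 := (h ∅).2
    rw [show x' '' ((∅ : Finset (Fin 4)) : Set (Fin 4)) = ∅ by simp,
      if_neg (by decide)] at h0
    have := aux_sat (AddSubgroup.closure (∅ : Set G)) h0 g n hn
      (by rw [hng]; exact AddSubgroup.zero_mem _)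
    simpa [AddSubgroup.closure_empty] using this
  -- extract the rank conditions for pairs, converted to spans
  have hrk : ∀ i j : Fin 4, i ≠ j →
      Module.finrank ℤ (Submodule.span ℤ ({x' i, x' j} : Set G)) = 2 := by
    intro i j hij
    have h1 := (h {i, j}).1
    rw [show x' '' (({i, j} : Finset (Fin 4)) : Set (Fin 4)) = {x' i, x' j} by
        simp [Set.image_insert_eq],
      aux_finrank_closure] at h1
    rwa [Finset.card_pair hij] at h1
  -- independence facts for all pairs
  have ind01 := aux_indep hTF (x' 0) (x' 1) (hrk 0 1 (by decide))
  have ind02 := aux_indep hTF (x' 0) (x' 2) (hrk 0 2 (by decide))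
  have ind12 := aux_indep hTF (x' 1) (x' 2) (hrk 1 2 (by decide))
  have ind03 := aux_indep hTF (x' 0) (x' 3) (hrk 0 3 (by decide))
  have ind13 := aux_indep hTF (x' 1) (x' 3) (hrk 1 3 (by decide))
  have ind23 := aux_indep hTF (x' 2) (x' 3) (hrk 2 3 (by decide))
  -- torsion conditions: saturation for the pairs ≠ {2,3}
  have tor01 := (h {0, 1}).2
  rw [show x' '' (({0, 1} : Finset (Fin 4)) : Set (Fin 4)) = {x' 0, x' 1} by simp [Set.image_insert_eq],
    if_neg (by decide)] at tor01
  have tor02 := (h {0, 2}).2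
  rw [show x' '' (({0, 2} : Finset (Fin 4)) : Set (Fin 4)) = {x' 0, x' 2} by simp [Set.image_insert_eq],
    if_neg (by decide)] at tor02
  have tor12 := (h {1, 2}).2
  rw [show x' '' (({1, 2} : Finset (Fin 4)) : Set (Fin 4)) = {x' 1, x' 2} by simp [Set.image_insert_eq],
    if_neg (by decide)] at tor12
  have tor03 := (h {0, 3}).2
  rw [show x' '' (({0, 3} : Finset (Fin 4)) : Set (Fin 4)) = {x' 0, x' 3} by simp [Set.image_insert_eq],
    if_neg (by decide)] at tor03
  have tor13 := (h {1, 3}).2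
  rw [show x' '' (({1, 3} : Finset (Fin 4)) : Set (Fin 4)) = {x' 1, x' 3} by simp [Set.image_insert_eq],
    if_neg (by decide)] at tor13
  have tor23 := (h {2, 3}).2
  rw [show x' '' (({2, 3} : Finset (Fin 4)) : Set (Fin 4)) = {x' 2, x' 3} by simp [Set.image_insert_eq],
    if_pos rfl] at tor23
  -- the two triples
  have hrk012 := (h {0, 1, 2}).1
  rw [show x' '' (({0, 1, 2} : Finset (Fin 4)) : Set (Fin 4)) = {x' 0, x' 1, x' 2} by simp [Set.image_insert_eq],
    aux_finrank_closure, show ({0, 1, 2} : Finset (Fin 4)).card = 3 from by decide] at hrk012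
  have hrk013 := (h {0, 1, 3}).1
  rw [show x' '' (({0, 1, 3} : Finset (Fin 4)) : Set (Fin 4)) = {x' 0, x' 1, x' 3} by simp [Set.image_insert_eq],
    aux_finrank_closure, show ({0, 1, 3} : Finset (Fin 4)).card = 3 from by decide] at hrk013
  obtain ⟨a₁, b₁, c₁, hrel1, hne1⟩ := aux_triple (x' 0) (x' 1) (x' 2) (by simpa using hrk012)
  obtain ⟨a₂, b₂, c₂, hrel2, hne2⟩ := aux_triple (x' 0) (x' 1) (x' 3) (by simpa using hrk013)
  -- all coefficients are nonzero
  have hc1 : c₁ ≠ 0 := by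
    rintro rfl
    obtain ⟨e1, e2⟩ := ind01 a₁ b₁ (by simpa using hrel1)
    simp [e1, e2] at hne1
  have hb1 : b₁ ≠ 0 := by
    rintro rfl
    obtain ⟨e1, e2⟩ := ind02 a₁ c₁ (by
      have : a₁ • x' 0 + c₁ • x' 2 = 0 := by linear_combination (norm := module) hrel1
      exact this)
    simp [e1, e2] at hne1
  have ha1 : a₁ ≠ 0 := by
    rintro rfl
    obtain ⟨e1, e2⟩ := ind12 b₁ c₁ (by simpa using hrel1)
    simp [e1, e2] at hne1
  have hc2 : c₂ ≠ 0 := by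
    rintro rfl
    obtain ⟨e1, e2⟩ := ind01 a₂ b₂ (by simpa using hrel2)
    simp [e1, e2] at hne2
  have hb2 : b₂ ≠ 0 := by
    rintro rfl
    obtain ⟨e1, e2⟩ := ind03 a₂ c₂ (by
      have : a₂ • x' 0 + c₂ • x' 3 = 0 := by linear_combination (norm := module) hrel2
      exact this)
    simp [e1, e2] at hne2
  have ha2 : a₂ ≠ 0 := by
    rintro rfl
    obtain ⟨e1, e2⟩ := ind13 b₂ c₂ (by simpa using hrel2)
    simp [e1, e2] at hne2
  -- memberships via saturation
  have hy2 : x' 2 ∈ Submodule.span ℤ ({x' 0, x' 1} : Set G) := by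
    refine aux_sat' _ tor01 _ c₁ hc1 (Submodule.mem_span_pair.mpr ⟨-a₁, -b₁, ?_⟩)
    linear_combination (norm := module) -hrel1
  have hy3 : x' 3 ∈ Submodule.span ℤ ({x' 0, x' 1} : Set G) := by
    refine aux_sat' _ tor01 _ c₂ hc2 (Submodule.mem_span_pair.mpr ⟨-a₂, -b₂, ?_⟩)
    linear_combination (norm := module) -hrel2
  have hx1m02 : x' 1 ∈ Submodule.span ℤ ({x' 0, x' 2} : Set G) := by
    refine aux_sat' _ tor02 _ b₁ hb1 (Submodule.mem_span_pair.mpr ⟨-a₁, -c₁, ?_⟩)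
    linear_combination (norm := module) -hrel1
  have hx0m12 : x' 0 ∈ Submodule.span ℤ ({x' 1, x' 2} : Set G) := by
    refine aux_sat' _ tor12 _ a₁ ha1 (Submodule.mem_span_pair.mpr ⟨-b₁, -c₁, ?_⟩)
    linear_combination (norm := module) -hrel1
  have hx1m03 : x' 1 ∈ Submodule.span ℤ ({x' 0, x' 3} : Set G) := by
    refine aux_sat' _ tor03 _ b₂ hb2 (Submodule.mem_span_pair.mpr ⟨-a₂, -c₂, ?_⟩)
    linear_combination (norm := module) -hrel2
  have hx0m13 : x' 0 ∈ Submodule.span ℤ ({x' 1, x' 3} : Set G) := by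
    refine aux_sat' _ tor13 _ a₂ ha2 (Submodule.mem_span_pair.mpr ⟨-b₂, -c₂, ?_⟩)
    linear_combination (norm := module) -hrel2
  -- coordinates of x'2 and x'3 with respect to x'0, x'1
  obtain ⟨a, b, hab⟩ := Submodule.mem_span_pair.mp hy2
  obtain ⟨c, d, hcd⟩ := Submodule.mem_span_pair.mp hy3
  -- a, b, c, d are units
  obtain ⟨p, q, hpq⟩ := Submodule.mem_span_pair.mp hx1m02
  have hbu : b = 1 ∨ b = -1 := by
    have hz : (p + q * a) • x' 0 + (q * b - 1) • x' 1 = 0 := by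
      linear_combination (norm := module) q • hab + hpq
    have := (ind01 _ _ hz).2
    have hmul : b * q = 1 := by rw [mul_comm]; omega
    exact Int.isUnit_iff.mp (IsUnit.of_mul_eq_one _ hmul)
  obtain ⟨r, s, hrs⟩ := Submodule.mem_span_pair.mp hx0m12
  have hau : a = 1 ∨ a = -1 := by
    have hz : (s * a - 1) • x' 0 + (r + s * b) • x' 1 = 0 := by
      linear_combination (norm := module) s • hab + hrs
    have := (ind01 _ _ hz).1
    have hmul : a * s = 1 := by rw [mul_comm]; omega
    exact Int.isUnit_iff.mp (IsUnit.of_mul_eq_one _ hmul)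
  obtain ⟨p2, q2, hpq2⟩ := Submodule.mem_span_pair.mp hx1m03
  have hdu : d = 1 ∨ d = -1 := by
    have hz : (p2 + q2 * c) • x' 0 + (q2 * d - 1) • x' 1 = 0 := by
      linear_combination (norm := module) q2 • hcd + hpq2
    have := (ind01 _ _ hz).2
    have hmul : d * q2 = 1 := by rw [mul_comm]; omega
    exact Int.isUnit_iff.mp (IsUnit.of_mul_eq_one _ hmul)
  obtain ⟨r2, s2, hrs2⟩ := Submodule.mem_span_pair.mp hx0m13
  have hcu : c = 1 ∨ c = -1 := by
    have hz : (s2 * c - 1) • x' 0 + (r2 + s2 * d) • x' 1 = 0 := by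
      linear_combination (norm := module) s2 • hcd + hrs2
    have := (ind01 _ _ hz).1
    have hmul : c * s2 = 1 := by rw [mul_comm]; omega
    exact Int.isUnit_iff.mp (IsUnit.of_mul_eq_one _ hmul)
  -- 2 • x'0 lies in the span of {x'2, x'3}
  have key : (2 : ℤ) • x' 0 ∈ Submodule.span ℤ ({x' 2, x' 3} : Set G) := by
    rcases hau with rfl | rfl <;> rcases hbu with rfl | rfl <;>
      rcases hcu with rfl | rfl <;> rcases hdu with rfl | rfl <;>
      first
      | exact Submodule.mem_span_pair.mpr ⟨1, -1, by rw [← hab, ← hcd]; module⟩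
      | exact Submodule.mem_span_pair.mpr ⟨-1, 1, by rw [← hab, ← hcd]; module⟩
      | exact Submodule.mem_span_pair.mpr ⟨1, 1, by rw [← hab, ← hcd]; module⟩
      | exact Submodule.mem_span_pair.mpr ⟨-1, -1, by rw [← hab, ← hcd]; module⟩
      | exact absurd ((ind23 1 (-1) (by rw [← hab, ← hcd]; module)).1) one_ne_zero
      | exact absurd ((ind23 1 1 (by rw [← hab, ← hcd]; module)).1) one_ne_zero
  -- x'1 + (b*a) • x'0 lies in the span of {x'2, x'3}
  have hq1 : x' 1 + (b * a) • x' 0 ∈ Submodule.span ℤ ({x' 2, x' 3} : Set G) := by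
    have hbb : b * b = 1 := by rcases hbu with rfl | rfl <;> norm_num
    have heq : x' 1 + (b * a) • x' 0 = b • x' 2 := by
      rw [← hab]
      match_scalars
      · linear_combination -hbb
      · ring
    rw [heq]
    exact Submodule.smul_mem _ _ (Submodule.subset_span (by simp))
  -- now work in the quotient Q = G ⧸ ⟨x'2, x'3⟩
  set H23 : AddSubgroup G := AddSubgroup.closure ({x' 2, x' 3} : Set G) with hH23
  have key' : (2 : ℤ) • x' 0 ∈ H23 := aux_mem_closure_iff.mpr key
  have hq1' : x' 1 + (b * a) • x' 0 ∈ H23 := aux_mem_closure_iff.mpr hq1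
  have hsub : (AddCommGroup.torsion (G ⧸ H23) : Set (G ⧸ H23)) ⊆
      {0, ((x' 0 : G) : G ⧸ H23)} := by
    intro t ht
    obtain ⟨g, rfl⟩ := QuotientAddGroup.mk_surjective t
    have ht' : IsOfFinAddOrder ((g : G ⧸ H23)) := ht
    obtain ⟨n, hn, hnt⟩ := isOfFinAddOrder_iff_nsmul_eq_zero.mp ht'
    have hng : (n : ℤ) • g ∈ H23 := by
      rw [← QuotientAddGroup.eq_zero_iff (G := G) ((n : ℤ) • g)]
      have : (((n : ℤ) • g : G) : G ⧸ H23) = (n : ℤ) • ((g : G ⧸ H23)) := rfl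
      rw [this, natCast_zsmul]
      exact hnt
    have hle : H23 ≤ AddSubgroup.closure ({x' 0, x' 1} : Set G) := by
      rw [hH23]
      refine (AddSubgroup.closure_le _).mpr ?_
      rintro z (rfl | rfl)
      · exact aux_mem_closure_iff.mpr hy2
      · exact aux_mem_closure_iff.mpr hy3
    have hg01 : g ∈ Submodule.span ℤ ({x' 0, x' 1} : Set G) := by
      refine aux_sat' _ tor01 g (n : ℤ) (by exact_mod_cast hn.ne') ?_
      exact aux_mem_closure_iff.mp (hle hng)
    obtain ⟨m, k, hmk⟩ := Submodule.mem_span_pair.mp hg01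
    -- g - (m - k*(b*a)) • x'0 ∈ H23
    have hgK : g - (m - k * (b * a)) • x' 0 ∈ H23 := by
      have h6 := AddSubgroup.zsmul_mem H23 hq1' k
      have heq : k • (x' 1 + (b * a) • x' 0) = g - (m - k * (b * a)) • x' 0 := by
        rw [← hmk]; module
      rwa [heq] at h6
    have hgQ : (g : G ⧸ H23) = (m - k * (b * a)) • ((x' 0 : G) : G ⧸ H23) := by
      have := (QuotientAddGroup.eq_zero_iff _).mpr hgK
      have h7 : ((g - (m - k * (b * a)) • x' 0 : G) : G ⧸ H23)
          = (g : G ⧸ H23) - (m - k * (b * a)) • ((x' 0 : G) : G ⧸ H23) := rfl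
      rw [h7] at this
      exact sub_eq_zero.mp this
    have h2z : (2 : ℤ) • ((x' 0 : G) : G ⧸ H23) = 0 := by
      have := (QuotientAddGroup.eq_zero_iff _).mpr key'
      exact this
    set K := m - k * (b * a) with hK
    have hred : (g : G ⧸ H23) = (K % 2) • ((x' 0 : G) : G ⧸ H23) := by
      rw [hgQ]
      conv_lhs => rw [show K = 2 * (K / 2) + K % 2 by omega]
      rw [add_smul, mul_comm 2 (K / 2), mul_smul, h2z, smul_zero, zero_add]
    simp only [Set.mem_insert_iff, Set.mem_singleton_iff]
    rcases Int.emod_two_eq K with he | he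
    · left
      rw [hred, he, zero_smul]
    · right
      rw [hred, he, one_smul]
  -- conclude: the torsion subgroup has at most 2 elements, contradicting card = 4
  have hcard2 : Nat.card (AddCommGroup.torsion (G ⧸ H23)) ≤ 2 := by
    have h8 : Nat.card (AddCommGroup.torsion (G ⧸ H23))
        = (AddCommGroup.torsion (G ⧸ H23) : Set (G ⧸ H23)).ncard := by
      rw [← Nat.card_coe_set_eq]
      rfl
    rw [h8]
    refine le_trans (Set.ncard_le_ncard hsub (Set.toFinite _)) ?_
    refine le_trans (Set.ncard_insert_le _ _) ?_
    simp
  rw [tor23] at hcard2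
  omega
end
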